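/- arXiv:math/0503233 — 5 statements merged into one kernel-verified Lean document; each statement's English description precedes it below -/
import Mathlib

section
/- Let h ≥ 2, let 1 ≤ e < h with f = e + 1, let n_1,…,n_h be positive integers, N_1 = n_1 + ⋯ + n_e, N_2 = n_f + ⋯ + n_h, N = N_1 + N_2. Let S be the sorted deck 1^{n_1},2^{n_2},…,h^{n_h} and let D be any deck that is a rearrangement of the same multiset of cards. Let D_{1e} be the deck of N_1 cards obtained from D by deleting all cards with labels > e (keeping relative order), and D_{fh} the deck of N_2 cards obtained by deleting all cards with labels ≤ e. For π a shuffle from S to D, define π_1 on {1,…,N_1} and π_2 on {1,…,N_2} as follows: if position i of S holds a card labeled δ ≤ e which π sends to the position of the j-th card labeled δ in D, then π_1(i) is the position of the j-th card labeled δ in D_{1e}; if position i of S holds a card labeled δ ≥ f sent to the position of the j-th card labeled δ in D, then π_2(i − N_1) is the position of the j-th card labeled δ in D_{fh}. Then π ↦ (π_1, π_2) is a bijection from the set of shuffles from S to D onto the product of the set of shuffles from 1^{n_1},…,e^{n_e} to D_{1e} with the set of shuffles from f^{n_f},…,h^{n_h} to D_{fh}, and moreover des(π) = des(π_1) + des(π_2)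 + ε, where ε = 1 if π(N_1) > π(N_1 + 1) and ε = 0 if π(N_1) < π(N_1 + 1). -/
/-- Number of descents of a sequence `f` of length `N`. -/
def des {N : ℕ} {α : Type*} [LinearOrder α] (f : Fin N → α) : ℕ :=
  ((Finset.univ : Finset (Fin N × Fin N)).filter
    (fun p => (p.1 : ℕ) + 1 = (p.2 : ℕ) ∧ f p.2 < f p.1)).card

set_option maxHeartbeats 1000000 in
theorem stmt2 (h e : ℕ) (hh : 2 ≤ h) (he1 : 1 ≤ e) (heh : e < h)
    (n : ℕ → ℕ) (hn : ∀ c, 1 ≤ c → c ≤ h → 1 ≤ n c)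
    (N N₁ N₂ : ℕ)
    (hN₁ : N₁ = ∑ c ∈ Finset.Icc 1 e, n c)
    (hN₂ : N₂ = ∑ c ∈ Finset.Icc (e + 1) h, n c)
    (hN : N = N₁ + N₂) (hN₁pos : 1 ≤ N₁) (hN₂pos : 1 ≤ N₂)
    -- `S` is the sorted deck `1^{n_1}, 2^{n_2}, …, h^{n_h}`:
    (S : Fin N → ℕ)
    (hS_mono : Monotone S) (hS_mem : ∀ i, 1 ≤ S i ∧ S i ≤ h)
    (hS_count : ∀ c, 1 ≤ c → c ≤ h →
      (Finset.univ.filter (fun i => S i = c)).card = n c)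
    -- `D` is a rearrangement of the same multiset of cards:
    (D : Fin N → ℕ)
    (hD_count : ∀ c : ℕ, (Finset.univ.filter (fun i => D i = c)).card
      = (Finset.univ.filter (fun i => S i = c)).card)
    -- `ι₁` enumerates (in increasing order) the positions of `D` with labels `≤ e`,
    -- so that `D ∘ ι₁ = D_{1e}`; similarly `ι₂` for labels `≥ f = e + 1`,
    -- `D ∘ ι₂ = D_{fh}`:
    (ι₁ : Fin N₁ → Fin N) (hι₁ : StrictMono ι₁)
    (hι₁im : ∀ j : Fin N, (∃ i, ι₁ i = j) ↔ D j ≤ e)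
    (ι₂ : Fin N₂ → Fin N) (hι₂ : StrictMono ι₂)
    (hι₂im : ∀ j : Fin N, (∃ i, ι₂ i = j) ↔ e + 1 ≤ D j) :
    -- The map `π ↦ (π₁, π₂)` is a bijection from the shuffles from `S` to `D`
    -- onto the product of the shuffles from `1^{n_1},…,e^{n_e}` (= S restricted
    -- to its first `N₁` positions) to `D_{1e}` with the shuffles from
    -- `f^{n_f},…,h^{n_h}` to `D_{fh}`, where `π₁`, `π₂` are characterized by
    -- `ι₁ (π₁ i) = π i` and `ι₂ (π₂ i) = π (N₁ + i)`; moreover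
    -- `des π = des π₁ + des π₂ + ε` with `ε = 1` iff `π(N₁) > π(N₁ + 1)`.
    ∃ Φ : {π : Equiv.Perm (Fin N) // ∀ i, D (π i) = S i} ≃
        ({σ : Equiv.Perm (Fin N₁) //
            ∀ i, D (ι₁ (σ i)) = S (Fin.castLE (by omega) i)} ×
         {τ : Equiv.Perm (Fin N₂) //
            ∀ i, D (ι₂ (τ i)) = S ⟨N₁ + (i : ℕ), by have := i.isLt; omega⟩}),
      ∀ π : {π : Equiv.Perm (Fin N) // ∀ i, D (π i) = S i},
        (∀ i : Fin N₁, ι₁ ((Φ π).1.1 i) = π.1 (Fin.castLE (by omega) i)) ∧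
        (∀ i : Fin N₂, ι₂ ((Φ π).2.1 i) = π.1 ⟨N₁ + (i : ℕ), by have := i.isLt; omega⟩) ∧
        des (fun i => π.1 i) =
          des (fun i => (Φ π).1.1 i) + des (fun i => (Φ π).2.1 i) +
            (if π.1 ⟨N₁, by omega⟩ < π.1 ⟨N₁ - 1, by omega⟩ then 1 else 0) := by
  classical
  have hN₁N : N₁ ≤ N := by omega
  have hN₁ltN : N₁ < N := by omega
  -- positions of S with label ≤ e are exactly the first N₁ positions
  have hTS : (Finset.univ.filter (fun i : Fin N => S i ≤ e)).card = N₁ := by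
    have hrw : (Finset.univ.filter (fun i : Fin N => S i ≤ e))
        = (Finset.Icc 1 e).biUnion (fun c => Finset.univ.filter (fun i => S i = c)) := by
      ext i
      simp only [Finset.mem_filter, Finset.mem_biUnion, Finset.mem_Icc, Finset.mem_univ,
        true_and]
      constructor
      · intro hi; exact ⟨S i, ⟨(hS_mem i).1, hi⟩, rfl⟩
      · rintro ⟨c, ⟨h1, h2⟩, rfl⟩; exact h2
    rw [hrw, Finset.card_biUnion, hN₁]
    · refine Finset.sum_congr rfl (fun c hc => ?_)
      rw [Finset.mem_Icc] at hc
      exact hS_count c hc.1 (le_trans hc.2 (le_of_lt heh))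
    · intro a _ b _ hab
      rw [Function.onFun, Finset.disjoint_left]
      intro i hi1 hi2
      simp only [Finset.mem_filter] at hi1 hi2
      exact hab (hi1.2 ▸ hi2.2.symm ▸ rfl)
  have hSlt : ∀ i : Fin N, (i : ℕ) < N₁ ↔ S i ≤ e := by
    intro i
    constructor
    · intro hi
      by_contra hgt
      push_neg at hgt
      have hsub : (Finset.univ.filter (fun j : Fin N => S j ≤ e)) ⊆ Finset.Iio i := by
        intro j hj
        simp only [Finset.mem_filter, Finset.mem_univ, true_and] at hj
        rw [Finset.mem_Iio]
        by_contra hij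
        push_neg at hij
        have := hS_mono hij
        omega
      have hcard := Finset.card_le_card hsub
      rw [hTS, Fin.card_Iio] at hcard
      omega
    · intro hSe
      by_contra hge
      push_neg at hge
      have hsub : Finset.Iic i ⊆ (Finset.univ.filter (fun j : Fin N => S j ≤ e)) := by
        intro j hj
        rw [Finset.mem_Iic] at hj
        simp only [Finset.mem_filter, Finset.mem_univ, true_and]
        have := hS_mono hj
        omega
      have hcard := Finset.card_le_card hsub
      rw [hTS, Fin.card_Iic] at hcard
      omega
  have hD₁ : ∀ i, D (ι₁ i) ≤ e := fun i => (hι₁im _).mp ⟨i, rfl⟩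
  have hD₂ : ∀ i, e + 1 ≤ D (ι₂ i) := fun i => (hι₂im _).mp ⟨i, rfl⟩
  -- existence of σf, τf
  have hex₁ : ∀ π : {π : Equiv.Perm (Fin N) // ∀ i, D (π i) = S i},
      ∀ i : Fin N₁, ∃ j : Fin N₁, ι₁ j = π.1 (Fin.castLE hN₁N i) := by
    intro π i
    apply (hι₁im _).mpr
    rw [π.2]
    exact (hSlt _).mp i.isLt
  have hex₂ : ∀ π : {π : Equiv.Perm (Fin N) // ∀ i, D (π i) = S i},
      ∀ i : Fin N₂, ∃ j : Fin N₂,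
        ι₂ j = π.1 ⟨N₁ + (i : ℕ), by have := i.isLt; omega⟩ := by
    intro π i
    apply (hι₂im _).mpr
    rw [π.2]
    by_contra hcon
    push_neg at hcon
    have h4 := (hSlt ⟨N₁ + (i : ℕ), by have := i.isLt; omega⟩).mpr (by omega)
    have h5 : N₁ + (i : ℕ) < N₁ := h4
    omega
  choose σf hσf using hex₁
  choose τf hτf using hex₂
  have hσbij : ∀ π, Function.Bijective (σf π) := by
    intro π
    rw [← Finite.injective_iff_bijective]
    intro a b hab
    have h1 : ι₁ (σf π a) = ι₁ (σf π b) := by rw [hab]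
    rw [hσf, hσf] at h1
    have h2 := π.1.injective h1
    have h3 := congrArg Fin.val h2
    exact Fin.ext h3
  have hτbij : ∀ π, Function.Bijective (τf π) := by
    intro π
    rw [← Finite.injective_iff_bijective]
    intro a b hab
    have h1 : ι₂ (τf π a) = ι₂ (τf π b) := by rw [hab]
    rw [hτf, hτf] at h1
    have h2 := π.1.injective h1
    have h3 := congrArg Fin.val h2
    have h4 : N₁ + (a : ℕ) = N₁ + (b : ℕ) := h3
    exact Fin.ext (by omega)
  -- the forward map, made opaque with its characterizing equations
  obtain ⟨F, hF1, hF2⟩ :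
      ∃ F : {π : Equiv.Perm (Fin N) // ∀ i, D (π i) = S i} →
        ({σ : Equiv.Perm (Fin N₁) //
            ∀ i, D (ι₁ (σ i)) = S (Fin.castLE (by omega) i)} ×
         {τ : Equiv.Perm (Fin N₂) //
            ∀ i, D (ι₂ (τ i)) = S ⟨N₁ + (i : ℕ), by have := i.isLt; omega⟩}),
        (∀ π i, ι₁ ((F π).1.1 i) = π.1 (Fin.castLE hN₁N i)) ∧
        (∀ π i, ι₂ ((F π).2.1 i) = π.1 ⟨N₁ + (i : ℕ), by have := i.isLt; omega⟩) := by
    refine ⟨fun π => (⟨Equiv.ofBijective _ (hσbij π), fun i => ?_⟩,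
      ⟨Equiv.ofBijective _ (hτbij π), fun i => ?_⟩), fun π i => hσf π i, fun π i => hτf π i⟩
    · show D (ι₁ (σf π i)) = _
      rw [hσf]; exact π.2 _
    · show D (ι₂ (τf π i)) = _
      rw [hτf]; exact π.2 _
  have hFinj : Function.Injective F := by
    intro π π' hFF
    apply Subtype.ext
    apply Equiv.ext
    intro j
    by_cases hj : (j : ℕ) < N₁
    · have t1 := hF1 π ⟨(j : ℕ), hj⟩
      have t2 := hF1 π' ⟨(j : ℕ), hj⟩
      rw [hFF] at t1
      exact (t1.symm.trans t2 : _)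
    · have hi₀ : (j : ℕ) - N₁ < N₂ := by have := j.isLt; omega
      have t1 := hF2 π ⟨(j : ℕ) - N₁, hi₀⟩
      have t2 := hF2 π' ⟨(j : ℕ) - N₁, hi₀⟩
      rw [hFF] at t1
      have t3 : π.1 ⟨N₁ + ((j : ℕ) - N₁), by have := j.isLt; omega⟩
          = π'.1 ⟨N₁ + ((j : ℕ) - N₁), by have := j.isLt; omega⟩ := t1.symm.trans t2
      have ej : j = (⟨N₁ + ((j : ℕ) - N₁), by have := j.isLt; omega⟩ : Fin N) :=
        Fin.ext (show (j : ℕ) = N₁ + ((j : ℕ) - N₁) by omega)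
      rw [ej]
      exact t3
  have hFsurj : Function.Surjective F := by
    rintro ⟨⟨σ, hσ⟩, ⟨τ, hτ⟩⟩
    obtain ⟨g, hgdef⟩ : ∃ g : Fin N → Fin N, ∀ i : Fin N,
        g i = if hi : (i : ℕ) < N₁ then ι₁ (σ ⟨(i : ℕ), hi⟩)
          else ι₂ (τ ⟨(i : ℕ) - N₁, by have := i.isLt; omega⟩) :=
      ⟨_, fun i => rfl⟩
    have hgpos : ∀ (i : Fin N) (hi : (i : ℕ) < N₁), g i = ι₁ (σ ⟨(i : ℕ), hi⟩) := by
      intro i hi; rw [hgdef, dif_pos hi]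
    have hgneg : ∀ (i : Fin N) (hi : ¬ (i : ℕ) < N₁),
        g i = ι₂ (τ ⟨(i : ℕ) - N₁, by have := i.isLt; omega⟩) := by
      intro i hi; rw [hgdef, dif_neg hi]
    have hginj : Function.Injective g := by
      intro a b hab
      by_cases ha : (a : ℕ) < N₁ <;> by_cases hb : (b : ℕ) < N₁
      · rw [hgpos a ha, hgpos b hb] at hab
        have h2 := σ.injective (hι₁.injective hab)
        have h3 := congrArg Fin.val h2
        exact Fin.ext h3
      · rw [hgpos a ha, hgneg b hb] at hab
        have hd1 := hD₁ (σ ⟨(a : ℕ), ha⟩)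
        rw [hab] at hd1
        have hd2 := hD₂ (τ ⟨(b : ℕ) - N₁, by have := b.isLt; omega⟩)
        omega
      · rw [hgneg a ha, hgpos b hb] at hab
        have hd2 := hD₂ (τ ⟨(a : ℕ) - N₁, by have := a.isLt; omega⟩)
        rw [hab] at hd2
        have hd1 := hD₁ (σ ⟨(b : ℕ), hb⟩)
        omega
      · rw [hgneg a ha, hgneg b hb] at hab
        have h2 := τ.injective (hι₂.injective hab)
        have h3 := congrArg Fin.val h2
        have h4 : (a : ℕ) - N₁ = (b : ℕ) - N₁ := h3
        exact Fin.ext (by omega)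
    have hgbij : Function.Bijective g := Finite.injective_iff_bijective.mp hginj
    have hπ0 : ∀ i, D ((Equiv.ofBijective g hgbij) i) = S i := by
      intro i
      show D (g i) = S i
      by_cases hi : (i : ℕ) < N₁
      · rw [hgpos i hi, hσ]
        rfl
      · rw [hgneg i hi, hτ]
        congr 1
        exact Fin.ext (show N₁ + ((i : ℕ) - N₁) = (i : ℕ) by have := i.isLt; omega)
    refine ⟨⟨Equiv.ofBijective g hgbij, hπ0⟩, ?_⟩
    refine Prod.ext (Subtype.ext (Equiv.ext fun i => ?_)) (Subtype.ext (Equiv.ext fun i => ?_))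
    · apply hι₁.injective
      rw [hF1]
      show g (Fin.castLE hN₁N i) = ι₁ (σ i)
      rw [hgpos _ i.isLt]
      rfl
    · apply hι₂.injective
      rw [hF2]
      show g ⟨N₁ + (i : ℕ), _⟩ = ι₂ (τ i)
      have hni : ¬ (((⟨N₁ + (i : ℕ), by have := i.isLt; omega⟩ : Fin N)) : ℕ) < N₁ := by
        simp only [Fin.val_mk]; omega
      rw [hgneg _ hni]
      have key : ∀ (z : Fin N₂), z = i → ι₂ (τ z) = ι₂ (τ i) := by
        intro z hz; rw [hz]
      exact key _ (Fin.ext (show N₁ + (i : ℕ) - N₁ = (i : ℕ) by omega))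
  -- descent identity
  have main : ∀ (π : Equiv.Perm (Fin N)) (σ : Equiv.Perm (Fin N₁)) (τ : Equiv.Perm (Fin N₂)),
      (∀ i : Fin N₁, ι₁ (σ i) = π (Fin.castLE hN₁N i)) →
      (∀ i : Fin N₂, ι₂ (τ i) = π ⟨N₁ + (i : ℕ),
        hN ▸ Nat.add_lt_add_left i.isLt N₁⟩) →
      des (fun i => π i) = des (fun i => σ i) + des (fun i => τ i) +
        (if π ⟨N₁, hN₁ltN⟩ < π ⟨N₁ - 1, Nat.lt_of_le_of_lt (Nat.sub_le N₁ 1) hN₁ltN⟩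
          then 1 else 0) := by
    intro π σ τ hk₁ hk₂
    clear hFinj hFsurj hF1 hF2 F hσbij hτbij hσf hτf σf τf hTS hSlt hD₁ hD₂
    clear hS_count hD_count hS_mono hS_mem hι₁im hι₂im hn hN₁ hN₂ S D n
    have hlt₁ : ∀ (a b : Fin N) (ha : (a : ℕ) < N₁) (hb : (b : ℕ) < N₁),
        σ ⟨(b : ℕ), hb⟩ < σ ⟨(a : ℕ), ha⟩ ↔ π b < π a := by
      intro a b ha hb
      rw [← hι₁.lt_iff_lt, hk₁ ⟨(b : ℕ), hb⟩, hk₁ ⟨(a : ℕ), ha⟩]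
      exact Iff.rfl
    have hlt₂ : ∀ (a b : Fin N) (ha : N₁ ≤ (a : ℕ)) (hb : N₁ ≤ (b : ℕ)),
        τ ⟨(b : ℕ) - N₁, by have := b.isLt; omega⟩ < τ ⟨(a : ℕ) - N₁, by have := a.isLt; omega⟩
          ↔ π b < π a := by
      intro a b ha hb
      rw [← hι₂.lt_iff_lt, hk₂ ⟨(b : ℕ) - N₁, by have := b.isLt; omega⟩,
        hk₂ ⟨(a : ℕ) - N₁, by have := a.isLt; omega⟩]
      have ea : (⟨N₁ + (((⟨(a : ℕ) - N₁, by have := a.isLt; omega⟩ : Fin N₂)) : ℕ),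
          by simp only [Fin.val_mk]; have := a.isLt; omega⟩ : Fin N) = a :=
        Fin.ext (show N₁ + ((a : ℕ) - N₁) = (a : ℕ) by omega)
      have eb : (⟨N₁ + (((⟨(b : ℕ) - N₁, by have := b.isLt; omega⟩ : Fin N₂)) : ℕ),
          by simp only [Fin.val_mk]; have := b.isLt; omega⟩ : Fin N) = b :=
        Fin.ext (show N₁ + ((b : ℕ) - N₁) = (b : ℕ) by omega)
      rw [ea, eb]
    -- descent counts as filter cards
    have h0 : des (fun i => π i) = (Finset.univ.filter (fun p : Fin N × Fin N =>
        (p.1 : ℕ) + 1 = (p.2 : ℕ) ∧ π p.2 < π p.1)).card := rfl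
    have hσ0 : des (fun i => σ i) = (Finset.univ.filter (fun q : Fin N₁ × Fin N₁ =>
        (q.1 : ℕ) + 1 = (q.2 : ℕ) ∧ σ q.2 < σ q.1)).card := rfl
    have hτ0 : des (fun i => τ i) = (Finset.univ.filter (fun q : Fin N₂ × Fin N₂ =>
        (q.1 : ℕ) + 1 = (q.2 : ℕ) ∧ τ q.2 < τ q.1)).card := rfl
    have hc₁ : (((Finset.univ.filter (fun p : Fin N × Fin N =>
          (p.1 : ℕ) + 1 = (p.2 : ℕ) ∧ π p.2 < π p.1)).filter
            (fun p => (p.2 : ℕ) < N₁))).card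
        = (Finset.univ.filter (fun q : Fin N₁ × Fin N₁ =>
          (q.1 : ℕ) + 1 = (q.2 : ℕ) ∧ σ q.2 < σ q.1)).card := by
      refine Finset.card_bij' (i := fun (p : Fin N × Fin N) hp =>
          ((⟨(p.1 : ℕ), (by simp only [Finset.mem_filter, Finset.mem_univ, true_and] at hp; omega)⟩ : Fin N₁),
           (⟨(p.2 : ℕ), (by simp only [Finset.mem_filter, Finset.mem_univ, true_and] at hp; omega)⟩ : Fin N₁)))
        (j := fun (q : Fin N₁ × Fin N₁) _ => (Fin.castLE hN₁N q.1, Fin.castLE hN₁N q.2))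
        ?_ ?_ ?_ ?_
      · intro p hp
        simp only [Finset.mem_filter, Finset.mem_univ, true_and] at hp ⊢
        obtain ⟨⟨h1, h2⟩, h3⟩ := hp
        have h4 : (p.1 : ℕ) < N₁ := by omega
        exact ⟨h1, (hlt₁ p.1 p.2 h4 h3).mpr h2⟩
      · intro q hq
        simp only [Finset.mem_filter, Finset.mem_univ, true_and] at hq ⊢
        obtain ⟨h1, h2⟩ := hq
        exact ⟨⟨h1, (hlt₁ (Fin.castLE hN₁N q.1) (Fin.castLE hN₁N q.2) q.1.isLt q.2.isLt).mp h2⟩,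
          q.2.isLt⟩
      · intro p hp
        exact Prod.ext (Fin.ext rfl) (Fin.ext rfl)
      · intro q hq
        exact Prod.ext (Fin.ext rfl) (Fin.ext rfl)
    have hc₂ : ((((Finset.univ.filter (fun p : Fin N × Fin N =>
          (p.1 : ℕ) + 1 = (p.2 : ℕ) ∧ π p.2 < π p.1)).filter
            (fun p => ¬ (p.2 : ℕ) < N₁)).filter (fun p => ¬ (p.1 : ℕ) < N₁))).card
        = (Finset.univ.filter (fun q : Fin N₂ × Fin N₂ =>
          (q.1 : ℕ) + 1 = (q.2 : ℕ) ∧ τ q.2 < τ q.1)).card := by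
      refine Finset.card_bij' (i := fun (p : Fin N × Fin N) hp =>
          ((⟨(p.1 : ℕ) - N₁, (by simp only [Finset.mem_filter, Finset.mem_univ, true_and] at hp; omega)⟩ : Fin N₂),
           (⟨(p.2 : ℕ) - N₁, (by simp only [Finset.mem_filter, Finset.mem_univ, true_and] at hp; have := p.2.isLt; omega)⟩ : Fin N₂)))
        (j := fun (q : Fin N₂ × Fin N₂) _ =>
          ((⟨N₁ + (q.1 : ℕ), by have := q.1.isLt; omega⟩ : Fin N),
           (⟨N₁ + (q.2 : ℕ), by have := q.2.isLt; omega⟩ : Fin N)))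
        ?_ ?_ ?_ ?_
      · intro p hp
        simp only [Finset.mem_filter, Finset.mem_univ, true_and] at hp ⊢
        obtain ⟨⟨⟨h1, h2⟩, h3⟩, h4⟩ := hp
        constructor
        · show (p.1 : ℕ) - N₁ + 1 = (p.2 : ℕ) - N₁
          omega
        · exact (hlt₂ p.1 p.2 (by omega) (by omega)).mpr h2
      · intro q hq
        simp only [Finset.mem_filter, Finset.mem_univ, true_and] at hq ⊢
        obtain ⟨h1, h2⟩ := hq
        refine ⟨⟨⟨show N₁ + (q.1 : ℕ) + 1 = N₁ + (q.2 : ℕ) by omega, ?_⟩,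
          show ¬ N₁ + (q.2 : ℕ) < N₁ by omega⟩, show ¬ N₁ + (q.1 : ℕ) < N₁ by omega⟩
        rw [← hk₂ q.1, ← hk₂ q.2]
        exact hι₂.lt_iff_lt.mpr h2
      · intro p hp
        simp only [Finset.mem_filter, Finset.mem_univ, true_and] at hp
        refine Prod.ext (Fin.ext ?_) (Fin.ext ?_)
        · show N₁ + ((p.1 : ℕ) - N₁) = (p.1 : ℕ)
          omega
        · show N₁ + ((p.2 : ℕ) - N₁) = (p.2 : ℕ)
          omega
      · intro q hq
        refine Prod.ext (Fin.ext ?_) (Fin.ext ?_)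
        · show N₁ + (q.1 : ℕ) - N₁ = (q.1 : ℕ)
          omega
        · show N₁ + (q.2 : ℕ) - N₁ = (q.2 : ℕ)
          omega
    have hc₀ : ((((Finset.univ.filter (fun p : Fin N × Fin N =>
          (p.1 : ℕ) + 1 = (p.2 : ℕ) ∧ π p.2 < π p.1)).filter
            (fun p => ¬ (p.2 : ℕ) < N₁)).filter (fun p => (p.1 : ℕ) < N₁))).card
        = (if π ⟨N₁, hN₁ltN⟩ < π ⟨N₁ - 1, by omega⟩ then 1 else 0) := by
      by_cases hc : π ⟨N₁, hN₁ltN⟩ < π ⟨N₁ - 1, by omega⟩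
      · rw [if_pos hc, Finset.card_eq_one]
        refine ⟨((⟨N₁ - 1, by omega⟩ : Fin N), (⟨N₁, hN₁ltN⟩ : Fin N)), ?_⟩
        ext p
        simp only [Finset.mem_filter, Finset.mem_univ, true_and, Finset.mem_singleton]
        constructor
        · rintro ⟨⟨⟨h1, h2⟩, h3⟩, h4⟩
          exact Prod.ext (Fin.ext (show (p.1 : ℕ) = N₁ - 1 by omega))
            (Fin.ext (show (p.2 : ℕ) = N₁ by omega))
        · rintro rfl
          exact ⟨⟨⟨show N₁ - 1 + 1 = N₁ by omega, hc⟩, show ¬ N₁ < N₁ by omega⟩,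
            show N₁ - 1 < N₁ by omega⟩
      · rw [if_neg hc, Finset.card_eq_zero, Finset.eq_empty_iff_forall_notMem]
        intro p hp
        simp only [Finset.mem_filter, Finset.mem_univ, true_and] at hp
        obtain ⟨⟨⟨h1, h2⟩, h3⟩, h4⟩ := hp
        have e1 : p.1 = (⟨N₁ - 1, by omega⟩ : Fin N) :=
          Fin.ext (show (p.1 : ℕ) = N₁ - 1 by omega)
        have e2 : p.2 = (⟨N₁, hN₁ltN⟩ : Fin N) :=
          Fin.ext (show (p.2 : ℕ) = N₁ by omega)
        exact hc (by rw [← e1, ← e2]; exact h2)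
    have d1 := Finset.card_filter_add_card_filter_not
      (s := Finset.univ.filter (fun p : Fin N × Fin N =>
        (p.1 : ℕ) + 1 = (p.2 : ℕ) ∧ π p.2 < π p.1))
      (p := fun p => (p.2 : ℕ) < N₁)
    have d2 := Finset.card_filter_add_card_filter_not
      (s := (Finset.univ.filter (fun p : Fin N × Fin N =>
        (p.1 : ℕ) + 1 = (p.2 : ℕ) ∧ π p.2 < π p.1)).filter (fun p => ¬ (p.2 : ℕ) < N₁))
      (p := fun p => (p.1 : ℕ) < N₁)
    rw [h0, hσ0, hτ0, ← hc₀, ← hc₁, ← hc₂]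
    omega
  refine ⟨Equiv.ofBijective F ⟨hFinj, hFsurj⟩,
    fun π => ⟨fun i => hF1 π i, fun i => hF2 π i, ?_⟩⟩
  exact main π.1 _ _ (fun i => hF1 π i) (fun i => hF2 π i)
end

section
/- Let h ≥ 1 and let D be a deck of N = n_1 + ⋯ + n_h cards that is a rearrangement of the multiset {1^{n_1}, 2^{n_2}, …, h^{n_h}} (n_c ≥ 1 cards labeled c). For each label c, let m_{c,1}, …, m_{c,γ_c} be the lengths of the maximal blocks of consecutive positions of D occupied by cards labeled c, so n_c = m_{c,1} + ⋯ + m_{c,γ_c}, and set p_c(x) = (n_c! / (m_{c,1}!⋯m_{c,γ_c}!)) · η_{m_{c,1}}(x)⋯η_{m_{c,γ_c}}(x). Then the descent polynomial of shuffles from D to the sorted deck 1^{n_1}, 2^{n_2}, …, h^{n_h} satisfies Σ_{π a shuffle from D to the sorted deck} x^{des(π)} = x^{des(D)} · p_1(x)·p_2(x)⋯p_h(x), where des(D) is the number of positions 1 ≤ k < N with D(k) > D(k+1). -/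
/-- Eulerian number `⟨m, d⟩`. -/
def eulerian (m d : ℕ) : ℕ :=
  ((Finset.univ : Finset (Equiv.Perm (Fin m))).filter
    (fun π => des (fun i => π i) = d)).card

/-- The Eulerian polynomial `η_m(x) = ∑_d ⟨m, d⟩ x^d`. -/
noncomputable def eta (m : ℕ) : Polynomial ℕ :=
  ∑ d ∈ Finset.range m, Polynomial.C (eulerian m d) * Polynomial.X ^ d

lemma des_comp_strictMono {N : ℕ} {α β : Type*} [LinearOrder α] [LinearOrder β]
    {e : α → β} (he : StrictMono e) (f : Fin N → α) :
    des (fun i => e (f i)) = des f := by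
  unfold des
  congr 1
  apply Finset.filter_congr
  intro p _
  simp [he.lt_iff_lt]

lemma des_lt {m : ℕ} {α : Type*} [LinearOrder α] (hm : 1 ≤ m) (f : Fin m → α) :
    des f < m := by
  rcases Nat.lt_or_ge m 2 with h2 | h2
  · have : des f = 0 := by
      unfold des
      rw [Finset.card_eq_zero, Finset.filter_eq_empty_iff]
      intro p _
      rintro ⟨hp, -⟩
      have := p.1.isLt
      have := p.2.isLt
      omega
    omega
  · have hle : des f ≤ m - 1 := by
      unfold des
      have hcard : (Finset.univ : Finset (Fin (m-1))).card = m - 1 := by simp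
      rw [← hcard]
      apply Finset.card_le_card_of_injOn
        (fun p => (⟨(p.1 : ℕ) % (m-1), Nat.mod_lt _ (by omega)⟩ : Fin (m-1)))
      · intro p hp; exact Finset.mem_univ _
      · intro p hp q hq hpq
        simp only [Finset.mem_coe, Finset.mem_filter] at hp hq
        have hpb : (p.1 : ℕ) < m - 1 := by have := p.2.isLt; omega
        have hqb : (q.1 : ℕ) < m - 1 := by have := q.2.isLt; omega
        have h1 : ((p.1 : ℕ) % (m-1)) = ((q.1 : ℕ) % (m-1)) := congrArg Fin.val hpq
        rw [Nat.mod_eq_of_lt hpb, Nat.mod_eq_of_lt hqb] at h1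
        have h2 : (p.2 : ℕ) = (q.2 : ℕ) := by omega
        ext
        · exact h1
        · exact h2
    omega

lemma sum_perm_des {m : ℕ} (hm : 1 ≤ m) :
    ∑ τ : Equiv.Perm (Fin m), (Polynomial.X : Polynomial ℕ) ^ des (fun i => τ i) = eta m := by
  rw [eta, ← Finset.sum_fiberwise_of_maps_to
    (g := fun τ : Equiv.Perm (Fin m) => des (fun i => τ i))
    (fun τ _ => Finset.mem_range.2 (des_lt hm _))]
  apply Finset.sum_congr rfl
  intro d _
  rw [Finset.sum_congr rfl (fun τ hτ => by
    rw [(Finset.mem_filter.1 hτ).2]), Finset.sum_const, eulerian, nsmul_eq_mul]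
  simp [Polynomial.C_eq_natCast]

def BlockMono (γ : ℕ) (mv : Fin γ → ℕ) (β : Type*) [LinearOrder β] : Type _ :=
  {g : (Σ t : Fin γ, Fin (mv t)) ≃ β // ∀ t : Fin γ, StrictMono fun i : Fin (mv t) => g ⟨t, i⟩}

lemma L1 (γ : ℕ) (mv : Fin γ → ℕ) (hm : ∀ t, 1 ≤ mv t)
    (β : Type*) [Fintype β] [LinearOrder β] [DecidableEq β]
    (hcard : Fintype.card β = ∑ t, mv t) :
    ∑ f : (Σ t : Fin γ, Fin (mv t)) ≃ β,
      ∏ t : Fin γ, (Polynomial.X : Polynomial ℕ) ^ des (fun i : Fin (mv t) => f ⟨t, i⟩)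
    = Polynomial.C (Nat.multinomial Finset.univ mv) * ∏ t : Fin γ, eta (mv t) := by
  classical
  haveI : Fintype (BlockMono γ mv β) := by unfold BlockMono; infer_instance
  have hcardA : Fintype.card (Σ t : Fin γ, Fin (mv t)) = ∑ t, mv t := by simp
  set Φ : BlockMono γ mv β × (∀ t : Fin γ, Equiv.Perm (Fin (mv t)))
      → ((Σ t : Fin γ, Fin (mv t)) ≃ β) :=
    fun gτ => (Equiv.sigmaCongrRight gτ.2).trans gτ.1.1 with hΦ
  have hΦbij : Function.Bijective Φ := by
    constructor
    · rintro ⟨g, τ⟩ ⟨g', τ'⟩ hfe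
      have happ : ∀ (t : Fin γ) (i : Fin (mv t)), g.1 ⟨t, τ t i⟩ = g'.1 ⟨t, τ' t i⟩ := by
        intro t i
        exact Equiv.ext_iff.1 hfe ⟨t, i⟩
      have hblock : ∀ t : Fin γ, (fun i : Fin (mv t) => g.1 ⟨t, i⟩)
          = (fun i : Fin (mv t) => g'.1 ⟨t, i⟩) := by
        intro t
        set s : Finset β := Finset.image (fun i : Fin (mv t) => g.1 ⟨t, i⟩) Finset.univ with hs
        have hsc : s.card = mv t := by
          rw [hs, Finset.card_image_of_injective _
            (fun i j hij => sigma_mk_injective (g.1.injective hij))]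
          simp
        have hmemg : ∀ i : Fin (mv t), g.1 ⟨t, i⟩ ∈ s := by
          intro i; rw [hs]; exact Finset.mem_image_of_mem _ (Finset.mem_univ i)
        have hmemg' : ∀ i : Fin (mv t), g'.1 ⟨t, i⟩ ∈ s := by
          intro i
          have : g'.1 ⟨t, i⟩ = g.1 ⟨t, τ t ((τ' t).symm i)⟩ := by
            rw [happ t ((τ' t).symm i)]
            simp
          rw [this]; exact hmemg _
        rw [Finset.orderEmbOfFin_unique hsc hmemg (g.2 t),
            Finset.orderEmbOfFin_unique hsc hmemg' (g'.2 t)]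
      have hg : g = g' := by
        apply Subtype.ext
        apply Equiv.ext
        rintro ⟨t, i⟩
        exact congrFun (hblock t) i
      subst hg
      have hτ : τ = τ' := by
        funext t
        apply Equiv.ext
        intro i
        have := happ t i
        have h2 := g.1.injective this
        exact eq_of_heq (Sigma.mk.inj_iff.1 h2).2
      rw [hτ]
    · intro f
      set s : Fin γ → Finset β := fun t => Finset.image (fun i : Fin (mv t) => f ⟨t, i⟩) Finset.univ
        with hs
      have hsc : ∀ t, (s t).card = mv t := by
        intro t
        rw [hs]
        rw [Finset.card_image_of_injective _
          (fun i j hij => sigma_mk_injective (f.injective hij))]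
        simp
      have hmemf : ∀ t (i : Fin (mv t)), f ⟨t, i⟩ ∈ s t := by
        intro t i; rw [hs]; exact Finset.mem_image_of_mem _ (Finset.mem_univ i)
      have hdisj : ∀ t t' : Fin γ, ∀ b : β, b ∈ s t → b ∈ s t' → t = t' := by
        intro t t' b hb hb'
        rw [hs] at hb hb'
        simp only [Finset.mem_image, Finset.mem_univ, true_and] at hb hb'
        obtain ⟨i, rfl⟩ := hb
        obtain ⟨i', hii⟩ := hb'
        have := f.injective hii
        exact (Sigma.mk.inj_iff.1 this).1.symm
      set u : ∀ t : Fin γ, Fin (mv t) → β := fun t => (s t).orderEmbOfFin (hsc t) with hu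
      have humem : ∀ t i, u t i ∈ s t := fun t i => Finset.orderEmbOfFin_mem _ _ _
      have hginj : Function.Injective (fun a : (Σ t : Fin γ, Fin (mv t)) => u a.1 a.2) := by
        rintro ⟨t, i⟩ ⟨t', i'⟩ hui
        simp only at hui
        have ht : t = t' := hdisj t t' _ (humem t i) (hui ▸ humem t' i')
        subst ht
        have : i = i' := ((s t).orderEmbOfFin (hsc t)).injective hui
        rw [this]
      have hgbij : Function.Bijective (fun a : (Σ t : Fin γ, Fin (mv t)) => u a.1 a.2) :=
        (Fintype.bijective_iff_injective_and_card _).2 ⟨hginj, by rw [hcardA, hcard]⟩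
      have hτbij : ∀ t : Fin γ, Function.Bijective (fun i : Fin (mv t) =>
          ((s t).orderIsoOfFin (hsc t)).symm ⟨f ⟨t, i⟩, hmemf t i⟩) := by
        intro t
        apply Finite.injective_iff_bijective.1
        intro i j hij
        have := ((s t).orderIsoOfFin (hsc t)).symm.injective hij
        have h2 : f ⟨t, i⟩ = f ⟨t, j⟩ := congrArg Subtype.val this
        exact eq_of_heq (Sigma.mk.inj_iff.1 (f.injective h2)).2
      refine ⟨⟨⟨Equiv.ofBijective _ hgbij, fun t => ((s t).orderEmbOfFin (hsc t)).strictMono⟩,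
        fun t => Equiv.ofBijective _ (hτbij t)⟩, ?_⟩
      apply Equiv.ext
      rintro ⟨t, i⟩
      show ((s t).orderEmbOfFin (hsc t)) (((s t).orderIsoOfFin (hsc t)).symm ⟨f ⟨t, i⟩, hmemf t i⟩)
        = f ⟨t, i⟩
      rw [← Finset.coe_orderIsoOfFin_apply, OrderIso.apply_symm_apply]
  rw [← Fintype.sum_bijective Φ hΦbij _ _ (fun gτ => rfl)]
  have hdes : ∀ (gτ : BlockMono γ mv β × (∀ t : Fin γ, Equiv.Perm (Fin (mv t)))) (t : Fin γ),
      des (fun i : Fin (mv t) => Φ gτ ⟨t, i⟩) = des (fun i => gτ.2 t i) := by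
    intro gτ t
    have : (fun i : Fin (mv t) => Φ gτ ⟨t, i⟩)
        = fun i : Fin (mv t) => gτ.1.1 ⟨t, gτ.2 t i⟩ := rfl
    rw [this]
    exact des_comp_strictMono (gτ.1.2 t) (fun i => gτ.2 t i)
  calc ∑ gτ : BlockMono γ mv β × (∀ t : Fin γ, Equiv.Perm (Fin (mv t))),
        ∏ t : Fin γ, (Polynomial.X : Polynomial ℕ) ^ des (fun i : Fin (mv t) => Φ gτ ⟨t, i⟩)
      = ∑ gτ : BlockMono γ mv β × (∀ t : Fin γ, Equiv.Perm (Fin (mv t))),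
        ∏ t : Fin γ, (Polynomial.X : Polynomial ℕ) ^ des (fun i => gτ.2 t i) := by
        apply Finset.sum_congr rfl
        intro gτ _
        exact Finset.prod_congr rfl (fun t _ => by rw [hdes gτ t])
    _ = ∑ g : BlockMono γ mv β, ∑ τ : (∀ t : Fin γ, Equiv.Perm (Fin (mv t))),
        ∏ t : Fin γ, (Polynomial.X : Polynomial ℕ) ^ des (fun i => τ t i) :=
        Fintype.sum_prod_type _
    _ = Fintype.card (BlockMono γ mv β) •
        ∑ τ : (∀ t : Fin γ, Equiv.Perm (Fin (mv t))),
        ∏ t : Fin γ, (Polynomial.X : Polynomial ℕ) ^ des (fun i => τ t i) := by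
        rw [Finset.sum_const, Finset.card_univ]
    _ = Polynomial.C (Nat.multinomial Finset.univ mv) * ∏ t : Fin γ, eta (mv t) := by
        have hpi : ∑ τ : (∀ t : Fin γ, Equiv.Perm (Fin (mv t))),
            ∏ t : Fin γ, (Polynomial.X : Polynomial ℕ) ^ des (fun i => τ t i)
            = ∏ t : Fin γ, eta (mv t) := by
          have h1 : ∏ t : Fin γ, eta (mv t)
              = ∏ t : Fin γ, ∑ σ ∈ (Finset.univ : Finset (Equiv.Perm (Fin (mv t)))),
                  (Polynomial.X : Polynomial ℕ) ^ des (fun i => σ i) :=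
            Finset.prod_congr rfl (fun t _ => (sum_perm_des (hm t)).symm)
          rw [h1, Finset.prod_univ_sum, Fintype.piFinset_univ]
        rw [hpi]
        have hcardG : Fintype.card (BlockMono γ mv β) = Nat.multinomial Finset.univ mv := by
          have hc1 : Fintype.card ((Σ t : Fin γ, Fin (mv t)) ≃ β)
              = Nat.factorial (∑ t, mv t) := by
            rw [Fintype.card_equiv (Fintype.equivOfCardEq (hcardA.trans hcard.symm)), hcardA]
          have hc2 := Fintype.card_of_bijective hΦbij
          rw [Fintype.card_prod, Fintype.card_pi] at hc2
          simp only [Fintype.card_perm, Fintype.card_fin] at hc2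
          have hms := Nat.multinomial_spec Finset.univ mv
          apply Nat.eq_of_mul_eq_mul_right
            (Finset.prod_pos (fun t _ => Nat.factorial_pos (mv t)))
          rw [hc2, hc1, ← hms, mul_comm]
        rw [hcardG, nsmul_eq_mul, ← Polynomial.C_eq_natCast, Nat.cast_id]

set_option maxHeartbeats 1000000

theorem stmt6 (h N : ℕ) (hh : 1 ≤ h)
    (D S : Fin N → ℕ)
    (hD_mem : ∀ i, 1 ≤ D i ∧ D i ≤ h)
    (hD_pos : ∀ c, 1 ≤ c → c ≤ h → 1 ≤ (Finset.univ.filter (fun i => D i = c)).card)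
    -- `S` is the sorted deck `1^{n_1}, …, h^{n_h}` rearranging the cards of `D`:
    (hS_mono : Monotone S)
    (hS_count : ∀ c : ℕ, (Finset.univ.filter (fun i => S i = c)).card
      = (Finset.univ.filter (fun i => D i = c)).card)
    -- for each label `c`, `m c 0, …, m c (γ c - 1)` are the lengths of the
    -- maximal blocks of consecutive positions of `D` occupied by cards
    -- labeled `c` (in left-to-right order, with starting positions `start t`):
    (γ : ℕ → ℕ) (m : ℕ → ℕ → ℕ)
    (hblocks : ∀ c, 1 ≤ c → c ≤ h → ∃ start : ℕ → ℕ,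
      (∀ t, t < γ c → 1 ≤ m c t) ∧
      (∀ t, t + 1 < γ c → start t + m c t < start (t + 1)) ∧
      (∀ t, t < γ c → start t + m c t ≤ N) ∧
      (∀ i : Fin N, D i = c ↔ ∃ t < γ c, start t ≤ (i : ℕ) ∧ (i : ℕ) < start t + m c t)) :
    -- descent polynomial of shuffles from `D` to the sorted deck:
    (∑ π ∈ (Finset.univ : Finset (Equiv.Perm (Fin N))).filter
        (fun π => ∀ i, S (π i) = D i),
      (Polynomial.X : Polynomial ℕ) ^ des (fun i => π i))
    = Polynomial.X ^ des D *
        ∏ c ∈ Finset.Icc 1 h,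
          (Polynomial.C (Nat.multinomial (Finset.range (γ c)) (m c)) *
            ∏ t ∈ Finset.range (γ c), eta (m c t)) := by
  classical
  choose! start hm1 hgap hle hiff using hblocks
  have hDIcc : ∀ i, D i ∈ Finset.Icc 1 h := fun i => Finset.mem_Icc.2 ⟨(hD_mem i).1, (hD_mem i).2⟩
  have hcFS : ∀ c : ℕ, Fintype.card {j : Fin N // S j = c} = Fintype.card {i : Fin N // D i = c} := by
    intro c; simp only [Fintype.card_subtype]; exact hS_count c
  have hcross : ∀ (π : Equiv.Perm (Fin N)), (∀ i, S (π i) = D i) →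
      ∀ p q : Fin N, D q < D p → π q < π p := by
    intro π hπ p q hlt
    by_contra hle'
    push_neg at hle'
    have := hS_mono hle'
    rw [hπ, hπ] at this
    omega
  have hord : ∀ c, 1 ≤ c → c ≤ h → ∀ t t', t < t' → t' < γ c → start c t + m c t < start c t' := by
    intro c hc1 hc2 t t'
    induction t' with
    | zero => omega
    | succ u ih =>
      intro h1 h2
      have hgu := hgap c hc1 hc2 u h2
      rcases Nat.lt_succ_iff_lt_or_eq.1 h1 with hc | hc
      · have h3 := ih hc (by omega)
        have hmu := hm1 c hc1 hc2 u (by omega)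
        omega
      · subst hc; omega
  have huniq : ∀ c, 1 ≤ c → c ≤ h → ∀ t t' i, t < γ c → t' < γ c →
      start c t ≤ i → i < start c t + m c t → start c t' ≤ i → i < start c t' + m c t' →
      t = t' := by
    intro c hc1 hc2 t t' i ht ht' h1 h2 h3 h4
    rcases lt_trichotomy t t' with hlt | heq | hgt
    · have := hord c hc1 hc2 t t' hlt ht'; omega
    · exact heq
    · have := hord c hc1 hc2 t' t hgt ht; omega
  have hposlt : ∀ c, 1 ≤ c → c ≤ h → ∀ t, t < γ c → ∀ k, k < m c t → start c t + k < N := by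
    intro c hc1 hc2 t ht k hk
    have := hle c hc1 hc2 t ht
    omega
  -- internal descents
  set intdes : ℕ → Equiv.Perm (Fin N) → ℕ := fun c π =>
    ((Finset.univ : Finset (Fin N × Fin N)).filter
      (fun p => (p.1 : ℕ) + 1 = (p.2 : ℕ) ∧ D p.1 = c ∧ D p.2 = c ∧ π p.2 < π p.1)).card
    with hintdef
  -- descent decomposition for shuffles
  have hdesdecomp : ∀ π : Equiv.Perm (Fin N), (∀ i, S (π i) = D i) →
      des (fun i => π i) = des D + ∑ c ∈ Finset.Icc 1 h, intdes c π := by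
    intro π hπ
    have h1 : ((Finset.univ : Finset (Fin N × Fin N)).filter
          (fun p => (p.1 : ℕ) + 1 = (p.2 : ℕ) ∧ π p.2 < π p.1))
        = ((Finset.univ : Finset (Fin N × Fin N)).filter
          (fun p => ((p.1 : ℕ) + 1 = (p.2 : ℕ) ∧ D p.2 < D p.1)
            ∨ ((p.1 : ℕ) + 1 = (p.2 : ℕ) ∧ D p.1 = D p.2 ∧ π p.2 < π p.1))) := by
      apply Finset.filter_congr
      intro p _
      constructor
      · rintro ⟨hadj, hdesc⟩
        rcases lt_trichotomy (D p.1) (D p.2) with hlt | heq | hgt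
        · exact absurd hdesc (asymm (hcross π hπ p.2 p.1 hlt))
        · exact Or.inr ⟨hadj, heq, hdesc⟩
        · exact Or.inl ⟨hadj, hgt⟩
      · rintro (⟨hadj, hdd⟩ | ⟨hadj, _, hdesc⟩)
        · exact ⟨hadj, hcross π hπ p.1 p.2 hdd⟩
        · exact ⟨hadj, hdesc⟩
    have h2 : ((Finset.univ : Finset (Fin N × Fin N)).filter
          (fun p => (p.1 : ℕ) + 1 = (p.2 : ℕ) ∧ D p.1 = D p.2 ∧ π p.2 < π p.1)).card
        = ∑ c ∈ Finset.Icc 1 h, intdes c π := by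
      rw [Finset.card_eq_sum_card_fiberwise (f := fun p : Fin N × Fin N => D p.1)
        (t := Finset.Icc 1 h) (fun p _ => hDIcc p.1)]
      apply Finset.sum_congr rfl
      intro c _
      rw [Finset.filter_filter, hintdef]
      congr 1
      apply Finset.filter_congr
      intro p _
      constructor
      · rintro ⟨⟨hadj, heq, hdesc⟩, hc⟩
        exact ⟨hadj, hc, by omega, hdesc⟩
      · rintro ⟨hadj, hc1, hc2, hdesc⟩
        exact ⟨⟨hadj, by omega, hdesc⟩, hc1⟩
    show ((Finset.univ : Finset (Fin N × Fin N)).filter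
        (fun p => (p.1 : ℕ) + 1 = (p.2 : ℕ) ∧ π p.2 < π p.1)).card = _
    rw [h1, Finset.filter_or, Finset.card_union_of_disjoint, h2]
    · rfl
    · rw [Finset.disjoint_left]
      intro p hp hq
      rw [Finset.mem_filter] at hp hq
      obtain ⟨-, -, hdd⟩ := hp
      obtain ⟨-, -, heq, -⟩ := hq
      omega
  -- product decomposition of shuffles
  set toFun : (∀ c : {x // x ∈ Finset.Icc 1 h},
      {i : Fin N // D i = (c : ℕ)} ≃ {j : Fin N // S j = (c : ℕ)}) → Fin N → Fin N :=
    fun e i => ((e ⟨D i, hDIcc i⟩) ⟨i, rfl⟩).1 with htoFundef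
  have htoFun : ∀ e (c : {x // x ∈ Finset.Icc 1 h}) (x : {i : Fin N // D i = (c : ℕ)}),
      toFun e x.1 = ((e c) x).1 := by
    intro e c x
    obtain ⟨xv, hxv⟩ := x
    have hc : (⟨D xv, hDIcc xv⟩ : {x // x ∈ Finset.Icc 1 h}) = c := Subtype.ext hxv
    subst hc
    rfl
  have hSval : ∀ e (i : Fin N), S (toFun e i) = D i := by
    intro e i
    exact ((e ⟨D i, hDIcc i⟩) ⟨i, rfl⟩).2
  have hinj : ∀ e, Function.Injective (toFun e) := by
    intro e i i' hii
    have hD : D i = D i' := by rw [← hSval e i, ← hSval e i', hii]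
    have h2 : toFun e i' = ((e ⟨D i, hDIcc i⟩) ⟨i', hD.symm⟩).1 :=
      htoFun e ⟨D i, hDIcc i⟩ ⟨i', hD.symm⟩
    have h1 : toFun e i = ((e ⟨D i, hDIcc i⟩) ⟨i, rfl⟩).1 := rfl
    rw [h1, h2] at hii
    have := (e ⟨D i, hDIcc i⟩).injective (Subtype.ext hii)
    exact congrArg Subtype.val this
  set toPerm : (∀ c : {x // x ∈ Finset.Icc 1 h},
      {i : Fin N // D i = (c : ℕ)} ≃ {j : Fin N // S j = (c : ℕ)}) → Equiv.Perm (Fin N) :=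
    fun e => Equiv.ofBijective (toFun e) (Finite.injective_iff_bijective.1 (hinj e))
    with htoPermdef
  have htoPermapp : ∀ e i, toPerm e i = toFun e i := fun e i => rfl
  have hsum : ∑ e : (∀ c : {x // x ∈ Finset.Icc 1 h},
        {i : Fin N // D i = (c : ℕ)} ≃ {j : Fin N // S j = (c : ℕ)}),
        (Polynomial.X : Polynomial ℕ) ^ des (fun i => toPerm e i)
      = ∑ π ∈ (Finset.univ : Finset (Equiv.Perm (Fin N))).filter
          (fun π => ∀ i, S (π i) = D i),
        (Polynomial.X : Polynomial ℕ) ^ des (fun i => π i) := by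
    apply Finset.sum_bij (fun e _ => toPerm e)
    · intro e _
      exact Finset.mem_filter.2 ⟨Finset.mem_univ _, fun i => hSval e i⟩
    · intro e _ e' _ hee
      funext c
      apply Equiv.ext
      intro x
      apply Subtype.ext
      calc ((e c) x).1 = toFun e x.1 := (htoFun e c x).symm
        _ = toPerm e x.1 := rfl
        _ = toPerm e' x.1 := by rw [hee]
        _ = ((e' c) x).1 := htoFun e' c x
    · intro π hπmem
      have hπ := (Finset.mem_filter.1 hπmem).2
      have hbijc : ∀ c : {x // x ∈ Finset.Icc 1 h},
          Function.Bijective (fun x : {i : Fin N // D i = (c : ℕ)} =>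
            (⟨π x.1, by rw [hπ x.1]; exact x.2⟩ : {j : Fin N // S j = (c : ℕ)})) := by
        intro c
        rw [Fintype.bijective_iff_injective_and_card]
        constructor
        · intro x y hxy
          have : π x.1 = π y.1 := congrArg Subtype.val hxy
          exact Subtype.ext (π.injective this)
        · exact (hcFS (c : ℕ)).symm
      refine ⟨fun c => Equiv.ofBijective _ (hbijc c), Finset.mem_univ _, ?_⟩
      apply Equiv.ext
      intro i
      rfl
    · intro e _
      rfl
  -- per-label machinery
  have hc1m : ∀ c : {x // x ∈ Finset.Icc 1 h}, 1 ≤ (c : ℕ) := fun c => (Finset.mem_Icc.1 c.2).1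
  have hc2m : ∀ c : {x // x ∈ Finset.Icc 1 h}, (c : ℕ) ≤ h := fun c => (Finset.mem_Icc.1 c.2).2
  have hDσ : ∀ (c : {x // x ∈ Finset.Icc 1 h}) (t : Fin (γ (c : ℕ))) (k : Fin (m (c : ℕ) (t : ℕ))),
      D ⟨start (c : ℕ) t + k, hposlt _ (hc1m c) (hc2m c) t t.isLt k k.isLt⟩ = (c : ℕ) := by
    intro c t k
    rw [hiff _ (hc1m c) (hc2m c)]
    refine ⟨t, t.isLt, ?_, ?_⟩
    · show start (c : ℕ) t ≤ start (c : ℕ) t + (k : ℕ)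
      omega
    · show start (c : ℕ) t + (k : ℕ) < start (c : ℕ) t + m (c : ℕ) t
      have := k.isLt
      omega
  set σfun : ∀ c : {x // x ∈ Finset.Icc 1 h},
      (Σ t : Fin (γ (c : ℕ)), Fin (m (c : ℕ) (t : ℕ))) → {i : Fin N // D i = (c : ℕ)} :=
    fun c a => ⟨⟨start (c : ℕ) a.1 + a.2,
      hposlt _ (hc1m c) (hc2m c) a.1 a.1.isLt a.2 a.2.isLt⟩, hDσ c a.1 a.2⟩
    with hσfundef
  have hσbij : ∀ c, Function.Bijective (σfun c) := by
    intro c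
    constructor
    · rintro ⟨t1, k1⟩ ⟨t2, k2⟩ hab
      have hval : start (c : ℕ) t1 + (k1 : ℕ) = start (c : ℕ) t2 + (k2 : ℕ) :=
        congrArg (fun x : {i : Fin N // D i = (c : ℕ)} => ((x.1 : ℕ))) hab
      have ht : (t1 : ℕ) = (t2 : ℕ) :=
        huniq _ (hc1m c) (hc2m c) t1 t2 (start (c : ℕ) t1 + k1) t1.isLt t2.isLt
          (Nat.le_add_right _ _) (by have := k1.isLt; omega)
          (by omega) (by have := k2.isLt; omega)
      obtain rfl : t1 = t2 := Fin.ext ht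
      have hk : k1 = k2 := Fin.ext (by omega)
      rw [hk]
    · rintro ⟨⟨iv, hiN⟩, hDi⟩
      obtain ⟨t, ht, hle1, hlt1⟩ := (hiff _ (hc1m c) (hc2m c) ⟨iv, hiN⟩).1 hDi
      have hle1' : start (c : ℕ) t ≤ iv := hle1
      have hlt1' : iv < start (c : ℕ) t + m (c : ℕ) t := hlt1
      refine ⟨⟨⟨t, ht⟩, ⟨iv - start (c : ℕ) t,
        (by omega : iv - start (c : ℕ) t < m (c : ℕ) t)⟩⟩, ?_⟩
      apply Subtype.ext
      apply Fin.ext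
      show start (c : ℕ) t + (iv - start (c : ℕ) t) = iv
      omega
  set σc : ∀ c : {x // x ∈ Finset.Icc 1 h},
      (Σ t : Fin (γ (c : ℕ)), Fin (m (c : ℕ) (t : ℕ))) ≃ {i : Fin N // D i = (c : ℕ)} :=
    fun c => Equiv.ofBijective _ (hσbij c) with hσcdef
  set stat : ∀ c : {x // x ∈ Finset.Icc 1 h},
      ({i : Fin N // D i = (c : ℕ)} ≃ {j : Fin N // S j = (c : ℕ)}) → ℕ :=
    fun c ec => ∑ t : Fin (γ (c : ℕ)),
      des (fun k : Fin (m (c : ℕ) (t : ℕ)) => ((ec (σc c ⟨t, k⟩)).1 : Fin N))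
    with hstatdef
  -- intdes as a sum of block descents
  have hintdes : ∀ (c : {x // x ∈ Finset.Icc 1 h}) (π : Equiv.Perm (Fin N)),
      intdes (c : ℕ) π = ∑ t : Fin (γ (c : ℕ)),
        des (fun k : Fin (m (c : ℕ) (t : ℕ)) => π ((σfun c ⟨t, k⟩).1)) := by
    intro c π
    have key : ((Finset.univ : Finset (Fin (γ (c : ℕ)))).sigma
          (fun t => (Finset.univ : Finset (Fin (m (c : ℕ) (t : ℕ)) × Fin (m (c : ℕ) (t : ℕ)))).filter
            (fun q => (q.1 : ℕ) + 1 = (q.2 : ℕ)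
              ∧ π ((σfun c ⟨t, q.2⟩).1) < π ((σfun c ⟨t, q.1⟩).1)))).card
        = ((Finset.univ : Finset (Fin N × Fin N)).filter
            (fun p => (p.1 : ℕ) + 1 = (p.2 : ℕ) ∧ D p.1 = (c : ℕ) ∧ D p.2 = (c : ℕ)
              ∧ π p.2 < π p.1)).card := by
      apply Finset.card_bij (fun a _ => ((σfun c ⟨a.1, a.2.1⟩).1, (σfun c ⟨a.1, a.2.2⟩).1))
      · rintro ⟨t, k1, k2⟩ ha
        obtain ⟨-, hmemf⟩ := Finset.mem_sigma.1 ha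
        obtain ⟨-, hk, hdesc⟩ := Finset.mem_filter.1 hmemf
        have hk' : (k1 : ℕ) + 1 = (k2 : ℕ) := hk
        have hdesc' : π ((σfun c ⟨t, k2⟩).1) < π ((σfun c ⟨t, k1⟩).1) := hdesc
        refine Finset.mem_filter.2 ⟨Finset.mem_univ _, ?_, (σfun c ⟨t, k1⟩).2, (σfun c ⟨t, k2⟩).2, hdesc'⟩
        show start (c : ℕ) t + (k1 : ℕ) + 1 = start (c : ℕ) t + (k2 : ℕ)
        omega
      · rintro ⟨t1, k1, k1'⟩ h1 ⟨t2, k2, k2'⟩ h2 heq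
        have e1 : start (c : ℕ) t1 + (k1 : ℕ) = start (c : ℕ) t2 + (k2 : ℕ) :=
          congrArg (fun p : Fin N × Fin N => (p.1 : ℕ)) heq
        have e2 : start (c : ℕ) t1 + (k1' : ℕ) = start (c : ℕ) t2 + (k2' : ℕ) :=
          congrArg (fun p : Fin N × Fin N => (p.2 : ℕ)) heq
        have hk1lt : (k1 : ℕ) < m (c : ℕ) (t1 : ℕ) := k1.isLt
        have hk2lt : (k2 : ℕ) < m (c : ℕ) (t2 : ℕ) := k2.isLt
        have ht : (t1 : ℕ) = (t2 : ℕ) := by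
          apply huniq _ (hc1m c) (hc2m c) t1 t2 (start (c : ℕ) t1 + (k1 : ℕ)) t1.isLt t2.isLt
          · omega
          · omega
          · omega
          · omega
        obtain rfl : t1 = t2 := Fin.ext ht
        have hka : (k1 : ℕ) = (k2 : ℕ) := by omega
        have hkb : (k1' : ℕ) = (k2' : ℕ) := by omega
        exact congrArg (Sigma.mk t1) (Prod.ext (Fin.ext hka) (Fin.ext hkb))
      · rintro ⟨p1, p2⟩ hp
        obtain ⟨-, hadj, hD1, hD2, hdesc⟩ := Finset.mem_filter.1 hp
        have hadj' : (p1 : ℕ) + 1 = (p2 : ℕ) := hadj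
        have hdesc' : π p2 < π p1 := hdesc
        have hD1' : D p1 = (c : ℕ) := hD1
        have hD2' : D p2 = (c : ℕ) := hD2
        obtain ⟨t1, ht1, ha1, hb1⟩ := (hiff _ (hc1m c) (hc2m c) p1).1 hD1'
        obtain ⟨t2, ht2, ha2, hb2⟩ := (hiff _ (hc1m c) (hc2m c) p2).1 hD2'
        have ht : t1 = t2 := by
          rcases lt_trichotomy t1 t2 with hlt | heqt | hgt
          · have := hord _ (hc1m c) (hc2m c) t1 t2 hlt ht2; omega
          · exact heqt
          · have := hord _ (hc1m c) (hc2m c) t2 t1 hgt ht1; omega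
        subst ht
        have hk1b : (p1 : ℕ) - start (c : ℕ) t1 < m (c : ℕ) t1 := by omega
        have hk2b : (p2 : ℕ) - start (c : ℕ) t1 < m (c : ℕ) t1 := by omega
        refine ⟨⟨⟨t1, ht1⟩, (⟨(p1 : ℕ) - start (c : ℕ) t1, hk1b⟩,
          ⟨(p2 : ℕ) - start (c : ℕ) t1, hk2b⟩)⟩, ?_, ?_⟩
        · have hq1 : (σfun c ⟨⟨t1, ht1⟩, ⟨(p1 : ℕ) - start (c : ℕ) t1, hk1b⟩⟩).1 = p1 := by
            apply Fin.ext
            show start (c : ℕ) t1 + ((p1 : ℕ) - start (c : ℕ) t1) = (p1 : ℕ)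
            omega
          have hq2 : (σfun c ⟨⟨t1, ht1⟩, ⟨(p2 : ℕ) - start (c : ℕ) t1, hk2b⟩⟩).1 = p2 := by
            apply Fin.ext
            show start (c : ℕ) t1 + ((p2 : ℕ) - start (c : ℕ) t1) = (p2 : ℕ)
            omega
          refine Finset.mem_sigma.2 ⟨Finset.mem_univ _, Finset.mem_filter.2
            ⟨Finset.mem_univ _, ?_, ?_⟩⟩
          · show (p1 : ℕ) - start (c : ℕ) t1 + 1 = (p2 : ℕ) - start (c : ℕ) t1
            omega
          · rw [hq1, hq2]
            exact hdesc'
        · apply Prod.ext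
          · apply Fin.ext
            show start (c : ℕ) t1 + ((p1 : ℕ) - start (c : ℕ) t1) = (p1 : ℕ)
            omega
          · apply Fin.ext
            show start (c : ℕ) t1 + ((p2 : ℕ) - start (c : ℕ) t1) = (p2 : ℕ)
            omega
    show ((Finset.univ : Finset (Fin N × Fin N)).filter
        (fun p => (p.1 : ℕ) + 1 = (p.2 : ℕ) ∧ D p.1 = (c : ℕ) ∧ D p.2 = (c : ℕ)
          ∧ π p.2 < π p.1)).card = _
    rw [← key, Finset.card_sigma]
    rfl
  -- link intdes and stat through toPerm
  have hstatlink : ∀ e (c : {x // x ∈ Finset.Icc 1 h}),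
      intdes (c : ℕ) (toPerm e) = stat c (e c) := by
    intro e c
    rw [hintdes c (toPerm e), hstatdef]
    apply Finset.sum_congr rfl
    intro t _
    congr 1
    funext k
    exact htoFun e c (σc c ⟨t, k⟩)
  -- per-label sum
  have hlabel : ∀ c : {x // x ∈ Finset.Icc 1 h},
      (∑ ec : ({i : Fin N // D i = (c : ℕ)} ≃ {j : Fin N // S j = (c : ℕ)}),
        (Polynomial.X : Polynomial ℕ) ^ stat c ec)
      = Polynomial.C (Nat.multinomial (Finset.range (γ (c : ℕ))) (m (c : ℕ))) *
          ∏ t ∈ Finset.range (γ (c : ℕ)), eta (m (c : ℕ) t) := by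
    intro c
    have hmv : ∀ t : Fin (γ (c : ℕ)), 1 ≤ m (c : ℕ) (t : ℕ) :=
      fun t => hm1 _ (hc1m c) (hc2m c) t t.isLt
    have hcardβ : Fintype.card {j : Fin N // S j = (c : ℕ)}
        = ∑ t : Fin (γ (c : ℕ)), m (c : ℕ) (t : ℕ) := by
      rw [hcFS, ← Fintype.card_congr (σc c)]
      simp
    have hbijtrans : Function.Bijective
        (fun ec : ({i : Fin N // D i = (c : ℕ)} ≃ {j : Fin N // S j = (c : ℕ)}) =>
          (σc c).trans ec) := by
      constructor
      · intro a b hab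
        apply Equiv.ext
        intro x
        have := Equiv.ext_iff.1 hab ((σc c).symm x)
        simpa using this
      · intro f
        refine ⟨(σc c).symm.trans f, ?_⟩
        apply Equiv.ext
        intro x
        simp
    have hXstat : ∀ ec : ({i : Fin N // D i = (c : ℕ)} ≃ {j : Fin N // S j = (c : ℕ)}),
        (Polynomial.X : Polynomial ℕ) ^ stat c ec
        = ∏ t : Fin (γ (c : ℕ)), (Polynomial.X : Polynomial ℕ)
            ^ des (fun k : Fin (m (c : ℕ) (t : ℕ)) => ((σc c).trans ec) ⟨t, k⟩) := by
      intro ec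
      rw [hstatdef, ← Finset.prod_pow_eq_pow_sum]
      apply Finset.prod_congr rfl
      intro t _
      exact congrArg (fun n => (Polynomial.X : Polynomial ℕ) ^ n)
        (des_comp_strictMono
          (e := (Subtype.val : {j : Fin N // S j = (c : ℕ)} → Fin N))
          (fun a b hab => Subtype.coe_lt_coe.2 hab)
          (fun k : Fin (m (c : ℕ) (t : ℕ)) => ((σc c).trans ec) ⟨t, k⟩)).symm
    calc (∑ ec : ({i : Fin N // D i = (c : ℕ)} ≃ {j : Fin N // S j = (c : ℕ)}),
          (Polynomial.X : Polynomial ℕ) ^ stat c ec)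
        = ∑ ec : ({i : Fin N // D i = (c : ℕ)} ≃ {j : Fin N // S j = (c : ℕ)}),
            ∏ t : Fin (γ (c : ℕ)), (Polynomial.X : Polynomial ℕ)
              ^ des (fun k : Fin (m (c : ℕ) (t : ℕ)) => ((σc c).trans ec) ⟨t, k⟩) :=
          Finset.sum_congr rfl (fun ec _ => hXstat ec)
      _ = ∑ f : ((Σ t : Fin (γ (c : ℕ)), Fin (m (c : ℕ) (t : ℕ))) ≃ {j : Fin N // S j = (c : ℕ)}),
            ∏ t : Fin (γ (c : ℕ)), (Polynomial.X : Polynomial ℕ)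
              ^ des (fun k : Fin (m (c : ℕ) (t : ℕ)) => f ⟨t, k⟩) :=
          Fintype.sum_bijective _ hbijtrans _ _ (fun ec => rfl)
      _ = Polynomial.C (Nat.multinomial Finset.univ (fun t : Fin (γ (c : ℕ)) => m (c : ℕ) (t : ℕ))) *
            ∏ t : Fin (γ (c : ℕ)), eta (m (c : ℕ) (t : ℕ)) :=
          L1 _ _ hmv _ hcardβ
      _ = Polynomial.C (Nat.multinomial (Finset.range (γ (c : ℕ))) (m (c : ℕ))) *
            ∏ t ∈ Finset.range (γ (c : ℕ)), eta (m (c : ℕ) t) := by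
          rw [Fin.prod_univ_eq_prod_range (fun t => eta (m (c : ℕ) t)) (γ (c : ℕ))]
          congr 1
          have s1 := Nat.multinomial_spec (Finset.univ : Finset (Fin (γ (c : ℕ))))
            (fun t : Fin (γ (c : ℕ)) => m (c : ℕ) (t : ℕ))
          have s2 := Nat.multinomial_spec (Finset.range (γ (c : ℕ))) (m (c : ℕ))
          rw [Fin.prod_univ_eq_prod_range (fun t => Nat.factorial (m (c : ℕ) t)) (γ (c : ℕ)),
            Fin.sum_univ_eq_sum_range (fun t => m (c : ℕ) t) (γ (c : ℕ))] at s1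
          have hpos : 0 < ∏ i ∈ Finset.range (γ (c : ℕ)), Nat.factorial (m (c : ℕ) i) :=
            Finset.prod_pos (fun i _ => Nat.factorial_pos _)
          exact congrArg Polynomial.C (Nat.eq_of_mul_eq_mul_left hpos (s1.trans s2.symm))
  -- final assembly
  rw [← hsum]
  calc (∑ e : (∀ c : {x // x ∈ Finset.Icc 1 h},
        {i : Fin N // D i = (c : ℕ)} ≃ {j : Fin N // S j = (c : ℕ)}),
        (Polynomial.X : Polynomial ℕ) ^ des (fun i => toPerm e i))
      = ∑ e : (∀ c : {x // x ∈ Finset.Icc 1 h},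
          {i : Fin N // D i = (c : ℕ)} ≃ {j : Fin N // S j = (c : ℕ)}),
          ((Polynomial.X : Polynomial ℕ) ^ des D *
            ∏ c : {x // x ∈ Finset.Icc 1 h}, (Polynomial.X : Polynomial ℕ) ^ stat c (e c)) := by
        apply Finset.sum_congr rfl
        intro e _
        rw [hdesdecomp (toPerm e) (fun i => hSval e i), pow_add]
        congr 1
        rw [← Finset.sum_coe_sort (Finset.Icc 1 h) (fun c => intdes c (toPerm e)),
          ← Finset.prod_pow_eq_pow_sum]
        exact Finset.prod_congr rfl (fun c _ => by rw [hstatlink e c])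
    _ = (Polynomial.X : Polynomial ℕ) ^ des D *
        ∑ e : (∀ c : {x // x ∈ Finset.Icc 1 h},
          {i : Fin N // D i = (c : ℕ)} ≃ {j : Fin N // S j = (c : ℕ)}),
          ∏ c : {x // x ∈ Finset.Icc 1 h}, (Polynomial.X : Polynomial ℕ) ^ stat c (e c) := by
        rw [← Finset.mul_sum]
    _ = (Polynomial.X : Polynomial ℕ) ^ des D *
        ∏ c : {x // x ∈ Finset.Icc 1 h},
          ∑ ec : ({i : Fin N // D i = (c : ℕ)} ≃ {j : Fin N // S j = (c : ℕ)}),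
            (Polynomial.X : Polynomial ℕ) ^ stat c ec := by
        congr 1
        rw [Finset.prod_univ_sum, Fintype.piFinset_univ]
    _ = (Polynomial.X : Polynomial ℕ) ^ des D *
        ∏ c : {x // x ∈ Finset.Icc 1 h},
          (Polynomial.C (Nat.multinomial (Finset.range (γ (c : ℕ))) (m (c : ℕ))) *
            ∏ t ∈ Finset.range (γ (c : ℕ)), eta (m (c : ℕ) t)) := by
        rw [Finset.prod_congr rfl (fun c _ => hlabel c)]
    _ = Polynomial.X ^ des D *
        ∏ c ∈ Finset.Icc 1 h,
          (Polynomial.C (Nat.multinomial (Finset.range (γ c)) (m c)) *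
            ∏ t ∈ Finset.range (γ c), eta (m c t)) := by
        rw [← Finset.prod_coe_sort (Finset.Icc 1 h)
          (fun c => Polynomial.C (Nat.multinomial (Finset.range (γ c)) (m c)) *
            ∏ t ∈ Finset.range (γ c), eta (m c t))]
end

section
/- Let D be a deck of N cards that is a rearrangement of the multiset {1^{n_1}, …, h^{n_h}} and let π be any shuffle from D to the sorted deck 1^{n_1}, 2^{n_2}, …, h^{n_h}. Then for every position 1 ≤ k < N at which D(k) ≠ D(k+1), π has a descent at k (i.e., π(k) > π(k+1)) if and only if D(k) > D(k+1). In particular, the number of positions k with D(k) ≠ D(k+1) and π(k) > π(k+1) equals des(D), independently of π. -/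
theorem stmt7 (N h : ℕ) (hh : 1 ≤ h)
    (D S : Fin N → ℕ)
    (hD_mem : ∀ i, 1 ≤ D i ∧ D i ≤ h)
    -- `S` is the sorted deck `1^{n_1}, …, h^{n_h}` rearranging the cards of `D`:
    (hS_mono : Monotone S)
    (hS_count : ∀ c : ℕ, (Finset.univ.filter (fun i => S i = c)).card
      = (Finset.univ.filter (fun i => D i = c)).card)
    -- `π` is a shuffle from `D` to the sorted deck `S`:
    (π : Equiv.Perm (Fin N)) (hπ : ∀ i, S (π i) = D i) :
    (∀ k l : Fin N, (k : ℕ) + 1 = (l : ℕ) → D k ≠ D l → (π l < π k ↔ D l < D k)) ∧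
    ((Finset.univ : Finset (Fin N × Fin N)).filter
        (fun p => (p.1 : ℕ) + 1 = (p.2 : ℕ) ∧ D p.1 ≠ D p.2 ∧ π p.2 < π p.1)).card
      = des D := by
  have key : ∀ k l : Fin N, D k ≠ D l → (π l < π k ↔ D l < D k) := by
    intro k l hne
    constructor
    · intro hlt
      rcases lt_or_gt_of_ne hne with hdk | hdk
      · exact absurd (hπ l ▸ hπ k ▸ hS_mono hlt.le : D l ≤ D k) (not_le.mpr hdk)
      · exact hdk
    · intro hlt
      by_contra hnot
      have : D k ≤ D l := hπ l ▸ hπ k ▸ hS_mono (not_lt.mp hnot)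
      exact absurd this (not_le.mpr hlt)
  refine ⟨fun k l _ hne => key k l hne, ?_⟩
  unfold des
  congr 1
  apply Finset.filter_congr
  intro p _
  simp only [and_congr_right_iff]
  intro _
  constructor
  · rintro ⟨hne, hlt⟩
    exact (key p.1 p.2 hne).mp hlt
  · intro hlt
    exact ⟨hlt.ne', (key p.1 p.2 hlt.ne').mpr hlt⟩
end

section
/- Let h ≥ 1, let n_1,…,n_h be positive integers with N = n_1 + ⋯ + n_h, let S = 1^{n_1}, 2^{n_2}, …, h^{n_h} be the sorted deck and R = h^{n_h}, …, 2^{n_2}, 1^{n_1} the reverse-sorted deck. For any deck D that is a rearrangement of the same multiset of cards and any integer a ≥ 1, let P_a(D) = Σ_{π a shuffle from S to D} C(a + N − 1 − des(π), N) / a^N be the probability that an a-shuffle of S results in D. Then for every a ≥ 1 and every such deck D, P_a(R) ≤ P_a(D) ≤ P_a(S); i.e., among all rearrangements D of the multiset, the a-shuffle transition probability from the sorted deck is greatest for D = S and least for D = R. -/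
/-- The probability that an `a`-shuffle of the deck `S` of `N` cards results in
the deck `D` (Bayer–Diaconis formula). -/
noncomputable def shuffleProb {N : ℕ} (a : ℕ) (S D : Fin N → ℕ) : ℝ :=
  ∑ π ∈ (Finset.univ : Finset (Equiv.Perm (Fin N))).filter
      (fun π => ∀ i, D (π i) = S i),
    (Nat.choose (a + N - 1 - des (fun i => π i)) N : ℝ) / (a : ℝ) ^ N

open Finset

variable {N : ℕ}

lemma count_comp (e : Equiv.Perm (Fin N)) (f : Fin N → ℕ) (c : ℕ) :
    (univ.filter fun i => f (e i) = c).card = (univ.filter fun i => f i = c).card := by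
  apply Finset.card_bij (fun i _ => e i)
  · intro i hi
    simp only [mem_filter, mem_univ, true_and] at hi ⊢
    exact hi
  · intro i _ j _ hij
    exact e.injective hij
  · intro j hj
    simp only [mem_filter, mem_univ, true_and] at hj
    exact ⟨e.symm j, by simp [mem_filter, hj], by simp⟩

lemma filter_le_card (f : Fin N → ℕ) (c : ℕ) :
    (univ.filter fun j => f j ≤ c).card
      = ∑ c' ∈ Finset.range (c + 1), (univ.filter fun j => f j = c').card := by
  rw [Finset.card_eq_sum_card_fiberwise (f := f) (t := Finset.range (c + 1))
    (by intro x hx; simp only [coe_filter, Set.mem_setOf_eq] at hx; simp [Nat.lt_succ_iff, hx.2])]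
  apply Finset.sum_congr rfl
  intro c' hc'
  congr 1
  ext j
  simp only [mem_filter, mem_univ, true_and, mem_range, Nat.lt_succ_iff] at hc' ⊢
  constructor
  · rintro ⟨_, h⟩; exact h
  · intro h; exact ⟨h ▸ hc', h⟩

lemma mono_mem (f : Fin N → ℕ) (hf : Monotone f) (c : ℕ) (i : Fin N) :
    f i ≤ c ↔ (i : ℕ) < (univ.filter fun j => f j ≤ c).card := by
  constructor
  · intro hle
    have hsub : Finset.Iic i ⊆ univ.filter fun j => f j ≤ c := by
      intro j hj
      exact mem_filter.2 ⟨mem_univ _, le_trans (hf (mem_Iic.1 hj)) hle⟩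
    have := Finset.card_le_card hsub
    rw [Fin.card_Iic] at this
    omega
  · intro hlt
    by_contra hc
    push_neg at hc
    have hsub : (univ.filter fun j => f j ≤ c) ⊆ Finset.Iio i := by
      intro j hj
      rw [mem_filter] at hj
      rw [mem_Iio]
      by_contra hji
      push_neg at hji
      exact absurd (le_trans (hf hji) hj.2) (not_le.2 hc)
    have := Finset.card_le_card hsub
    rw [Fin.card_Iio] at this
    omega

lemma monotone_unique (f g : Fin N → ℕ) (hf : Monotone f) (hg : Monotone g)
    (hcount : ∀ c, (univ.filter fun j => f j = c).card
      = (univ.filter fun j => g j = c).card) : f = g := by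
  have key : ∀ c, (univ.filter fun j => f j ≤ c).card
      = (univ.filter fun j => g j ≤ c).card := by
    intro c
    rw [filter_le_card, filter_le_card]
    exact Finset.sum_congr rfl fun c' _ => hcount c'
  funext i
  apply le_antisymm
  · rw [mono_mem f hf (g i) i, key]
    exact (mono_mem g hg (g i) i).1 le_rfl
  · rw [mono_mem g hg (f i) i, ← key]
    exact (mono_mem f hf (f i) i).1 le_rfl

lemma antitone_unique (f g : Fin N → ℕ) (hf : Antitone f) (hg : Antitone g)
    (hcount : ∀ c, (univ.filter fun j => f j = c).card
      = (univ.filter fun j => g j = c).card) : f = g := by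
  have hf' : Monotone fun i => f (Fin.rev i) := fun i j hij => hf (Fin.rev_le_rev.2 hij)
  have hg' : Monotone fun i => g (Fin.rev i) := fun i j hij => hg (Fin.rev_le_rev.2 hij)
  have hc' : ∀ c, (univ.filter fun j => f (Fin.rev j) = c).card
      = (univ.filter fun j => g (Fin.rev j) = c).card := by
    intro c
    have h1 := count_comp (Fin.revPerm) f c
    have h2 := count_comp (Fin.revPerm) g c
    simp only [Fin.revPerm_apply] at h1 h2
    rw [h1, h2]
    exact hcount c
  have := monotone_unique _ _ hf' hg' hc'
  funext i
  have h2 := congrFun this (Fin.rev i)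
  simpa [Fin.rev_rev] using h2

lemma exists_rank (F : Fin N → ℕ) :
    ∃ e : Equiv.Perm (Fin N),
      (∀ j j' : Fin N, e j < e j' ↔ F j * N + (j : ℕ) < F j' * N + (j' : ℕ)) ∧
      Monotone (fun k => F (e.symm k)) := by
  set κ : Fin N → ℕ := fun j => F j * N + (j : ℕ) with hκ
  have hinj : Function.Injective κ := by
    intro j j' hjj'
    have h1 : (j : ℕ) < N := j.isLt
    have h2 : (j' : ℕ) < N := j'.isLt
    have hmod : κ j % N = (j : ℕ) := by
      show (F j * N + (j : ℕ)) % N = (j : ℕ)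
      rw [Nat.add_mod, Nat.mul_mod_left]
      simp [Nat.mod_eq_of_lt h1]
    have hmod' : κ j' % N = (j' : ℕ) := by
      show (F j' * N + (j' : ℕ)) % N = (j' : ℕ)
      rw [Nat.add_mod, Nat.mul_mod_left]
      simp [Nat.mod_eq_of_lt h2]
    have : (j : ℕ) = (j' : ℕ) := by rw [← hmod, ← hmod', hjj']
    exact Fin.val_injective this
  set T : Finset ℕ := univ.image κ with hT
  have hTcard : T.card = N := by
    rw [hT, Finset.card_image_of_injective _ hinj, card_univ, Fintype.card_fin]
  set oi : Fin N ≃o {x // x ∈ T} := T.orderIsoOfFin hTcard with hoi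
  have hmemT : ∀ j, κ j ∈ T := fun j => mem_image.2 ⟨j, mem_univ _, rfl⟩
  set g : Fin N → {x // x ∈ T} := fun j => ⟨κ j, hmemT j⟩ with hg
  have hginj : Function.Injective g := by
    intro j j' hjj'
    exact hinj (Subtype.ext_iff.1 hjj')
  have hgbij : Function.Bijective g := by
    have : Fintype.card {x // x ∈ T} = Fintype.card (Fin N) := by
      rw [Fintype.card_coe, hTcard, Fintype.card_fin]
    exact (Fintype.bijective_iff_injective_and_card g).2 ⟨hginj, this.symm⟩
  set ge : Fin N ≃ {x // x ∈ T} := Equiv.ofBijective g hgbij with hge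
  refine ⟨ge.trans oi.symm.toEquiv, ?_, ?_⟩
  · intro j j'
    show oi.symm (ge j) < oi.symm (ge j') ↔ _
    rw [oi.symm.lt_iff_lt]
    show g j < g j' ↔ _
    exact Subtype.mk_lt_mk
  · intro k k' hkk'
    have hNpos : 0 < N := k.pos
    have happ : ∀ m : Fin N, κ ((ge.trans oi.symm.toEquiv).symm m) = (oi m : ℕ) := by
      intro m
      show κ (ge.symm (oi m)) = _
      have : g (ge.symm (oi m)) = oi m := by
        rw [hge]
        exact Equiv.ofBijective_apply_symm_apply g hgbij _
      exact Subtype.ext_iff.1 this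
    have hκle : κ ((ge.trans oi.symm.toEquiv).symm k) ≤ κ ((ge.trans oi.symm.toEquiv).symm k') := by
      rw [happ, happ]
      exact Subtype.coe_le_coe.2 (oi.le_iff_le.2 hkk')
    set u := (ge.trans oi.symm.toEquiv).symm k
    set v := (ge.trans oi.symm.toEquiv).symm k'
    show F u ≤ F v
    by_contra hcon
    push_neg at hcon
    have h1 : (u : ℕ) < N := u.isLt
    have h2 : F v * N + (v : ℕ) < F u * N + (u : ℕ) := by
      have : F v * N + (v : ℕ) < (F v + 1) * N := by
        rw [add_mul, one_mul]
        exact Nat.add_lt_add_left v.isLt _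
      have h3 : (F v + 1) * N ≤ F u * N := Nat.mul_le_mul_right N hcon
      omega
    apply absurd hκle
    show ¬ (F u * N + (u : ℕ) ≤ F v * N + (v : ℕ))
    omega

lemma des_comp_le (S X : Fin N → ℕ) (hS : Monotone S) (e : Equiv.Perm (Fin N))
    (he : ∀ j j' : Fin N, X j ≤ X j' → j < j' → e j < e j')
    (π : Equiv.Perm (Fin N)) (hπ : ∀ i, X (π i) = S i) :
    des (fun i => e (π i)) ≤ des (fun i => π i) := by
  apply Finset.card_le_card
  intro p hp
  simp only [mem_filter, mem_univ, true_and] at hp ⊢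
  obtain ⟨h1, h2⟩ := hp
  refine ⟨h1, ?_⟩
  by_contra hle
  push_neg at hle
  rcases lt_or_eq_of_le hle with hlt | heq
  · have hle12 : p.1 ≤ p.2 := by
      rw [Fin.le_def]; omega
    have hX : X (π p.1) ≤ X (π p.2) := by
      rw [hπ, hπ]; exact hS hle12
    exact absurd (he _ _ hX hlt) (not_lt.2 (le_of_lt h2))
  · have := π.injective heq
    have : (p.1 : ℕ) = (p.2 : ℕ) := congrArg Fin.val this
    omega

lemma shuffle_le (a : ℕ) (ha : 1 ≤ a) (S X Y : Fin N → ℕ) (hS : Monotone S)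
    (e : Equiv.Perm (Fin N)) (hXY : ∀ j, Y (e j) = X j)
    (he : ∀ j j' : Fin N, X j ≤ X j' → j < j' → e j < e j') :
    shuffleProb a S X ≤ shuffleProb a S Y := by
  unfold shuffleProb
  have hstep : ∀ π ∈ (Finset.univ : Finset (Equiv.Perm (Fin N))).filter
      (fun π => ∀ i, X (π i) = S i),
      (Nat.choose (a + N - 1 - des (fun i => π i)) N : ℝ) / (a : ℝ) ^ N
        ≤ (Nat.choose (a + N - 1 - des (fun i => e (π i))) N : ℝ) / (a : ℝ) ^ N := by
    intro π hπ
    simp only [mem_filter, mem_univ, true_and] at hπ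
    have hdes := des_comp_le S X hS e he π hπ
    have hc : Nat.choose (a + N - 1 - des (fun i => π i)) N
        ≤ Nat.choose (a + N - 1 - des (fun i => e (π i))) N :=
      Nat.choose_le_choose N (Nat.sub_le_sub_left hdes _)
    have hpow : (0 : ℝ) < (a : ℝ) ^ N := by positivity
    have hc' : (Nat.choose (a + N - 1 - des (fun i => π i)) N : ℝ)
        ≤ (Nat.choose (a + N - 1 - des (fun i => e (π i))) N : ℝ) := by
      exact_mod_cast hc
    exact (div_le_div_iff_of_pos_right hpow).2 hc'
  refine le_trans (Finset.sum_le_sum hstep) (le_of_eq ?_)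
  apply Finset.sum_nbij' (fun π => π.trans e) (fun π => π.trans e.symm)
  · intro π hπ
    simp only [mem_filter, mem_univ, true_and] at hπ ⊢
    intro i
    rw [Equiv.trans_apply, hXY, hπ]
  · intro π hπ
    simp only [mem_filter, mem_univ, true_and] at hπ ⊢
    intro i
    show X (e.symm (π i)) = S i
    rw [← hXY (e.symm (π i)), Equiv.apply_symm_apply]
    exact hπ i
  · intro π _
    ext i
    simp
  · intro π _
    ext i
    simp
  · intro π _
    rfl

theorem stmt8 (h N : ℕ) (hh : 1 ≤ h) (n : ℕ → ℕ)
    (hn : ∀ c, 1 ≤ c → c ≤ h → 1 ≤ n c)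
    (hN : N = ∑ c ∈ Finset.Icc 1 h, n c)
    (S R D : Fin N → ℕ)
    -- `S` is the sorted deck `1^{n_1}, 2^{n_2}, …, h^{n_h}`:
    (hS_mono : Monotone S) (hS_mem : ∀ i, 1 ≤ S i ∧ S i ≤ h)
    (hS_count : ∀ c, 1 ≤ c → c ≤ h →
      (Finset.univ.filter (fun i => S i = c)).card = n c)
    -- `R` is the reverse-sorted deck `h^{n_h}, …, 2^{n_2}, 1^{n_1}`:
    (hR_anti : Antitone R) (hR_mem : ∀ i, 1 ≤ R i ∧ R i ≤ h)
    (hR_count : ∀ c, 1 ≤ c → c ≤ h →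
      (Finset.univ.filter (fun i => R i = c)).card = n c)
    -- `D` is an arbitrary rearrangement of the same multiset of cards:
    (hD_count : ∀ c : ℕ, (Finset.univ.filter (fun i => D i = c)).card
      = (Finset.univ.filter (fun i => S i = c)).card)
    (a : ℕ) (ha : 1 ≤ a) :
    shuffleProb a S R ≤ shuffleProb a S D ∧ shuffleProb a S D ≤ shuffleProb a S S := by
  -- every value of `D` is attained by `S`, hence lies in `[1, h]`
  have hDh : ∀ j, 1 ≤ D j ∧ D j ≤ h := by
    intro j
    have hpos : 0 < (Finset.univ.filter (fun i => S i = D j)).card := by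
      rw [← hD_count]
      exact Finset.card_pos.2 ⟨j, Finset.mem_filter.2 ⟨Finset.mem_univ _, rfl⟩⟩
    obtain ⟨i, hi⟩ := Finset.card_pos.1 hpos
    have hi' : S i = D j := (Finset.mem_filter.1 hi).2
    exact hi' ▸ hS_mem i
  -- counts of `R` agree with counts of `S` for every natural `c`
  have hRS_count : ∀ c : ℕ, (Finset.univ.filter (fun i => R i = c)).card
      = (Finset.univ.filter (fun i => S i = c)).card := by
    intro c
    by_cases hc : 1 ≤ c ∧ c ≤ h
    · rw [hR_count c hc.1 hc.2, hS_count c hc.1 hc.2]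
    · rw [Finset.filter_eq_empty_iff.2, Finset.filter_eq_empty_iff.2]
      · intro i _
        have := hS_mem i
        omega
      · intro i _
        have := hR_mem i
        omega
  constructor
  · -- R ≤ D via the rank permutation of `h - D`
    obtain ⟨ρ, hρ_iff, hρ_mono⟩ := exists_rank (fun j => h - D j)
    have hDρ_anti : Antitone fun k => D (ρ.symm k) := by
      intro k k' hkk'
      have hmono : h - D (ρ.symm k) ≤ h - D (ρ.symm k') := hρ_mono hkk'
      have h1 := hDh (ρ.symm k)
      have h2 := hDh (ρ.symm k')
      show D (ρ.symm k') ≤ D (ρ.symm k)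
      omega
    have hDρ_count : ∀ c, (Finset.univ.filter (fun k => D (ρ.symm k) = c)).card
        = (Finset.univ.filter (fun i => R i = c)).card := by
      intro c
      rw [count_comp ρ.symm D c, hD_count c, hRS_count c]
    have hRρ : ∀ j, D (ρ.symm j) = R j := by
      have := antitone_unique _ _ hDρ_anti hR_anti hDρ_count
      intro j
      exact congrFun this j
    apply shuffle_le a ha S R D hS_mono ρ.symm hRρ
    intro j j' hRle hjj'
    by_contra hcon
    push_neg at hcon
    have hne : ρ.symm j ≠ ρ.symm j' := by
      intro hEq
      have : j = j' := by
        have := congrArg ρ hEq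
        simpa using this
      exact absurd this (ne_of_lt hjj')
    have hvu : ρ.symm j' < ρ.symm j := lt_of_le_of_ne hcon (Ne.symm hne)
    have hDuv : D (ρ.symm j) ≤ D (ρ.symm j') := by
      rw [hRρ j, hRρ j']; exact hRle
    have hsub : h - D (ρ.symm j') ≤ h - D (ρ.symm j) := Nat.sub_le_sub_left hDuv h
    have hκ : (h - D (ρ.symm j')) * N + ((ρ.symm j' : Fin N) : ℕ)
        < (h - D (ρ.symm j)) * N + ((ρ.symm j : Fin N) : ℕ) := by
      rcases lt_or_eq_of_le hsub with hlt | heq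
      · have hb : ((ρ.symm j' : Fin N) : ℕ) < N := (ρ.symm j').isLt
        nlinarith
      · rw [heq]
        have : ((ρ.symm j' : Fin N) : ℕ) < ((ρ.symm j : Fin N) : ℕ) := hvu
        omega
    have := (hρ_iff (ρ.symm j') (ρ.symm j)).2 hκ
    rw [Equiv.apply_symm_apply, Equiv.apply_symm_apply] at this
    exact absurd this (not_lt.2 (le_of_lt hjj'))
  · -- D ≤ S via the rank permutation of `D`
    obtain ⟨ψ, hψ_iff, hψ_mono⟩ := exists_rank D
    have hDψ_count : ∀ c, (Finset.univ.filter (fun k => D (ψ.symm k) = c)).card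
        = (Finset.univ.filter (fun i => S i = c)).card := by
      intro c
      rw [count_comp ψ.symm D c, hD_count c]
    have hSψ : ∀ j, S (ψ j) = D j := by
      have heq := monotone_unique _ _ hψ_mono hS_mono hDψ_count
      intro j
      have := congrFun heq (ψ j)
      rw [← this, Equiv.symm_apply_apply]
    apply shuffle_le a ha S D S hS_mono ψ hSψ
    intro j j' hDle hjj'
    rw [hψ_iff]
    rcases lt_or_eq_of_le hDle with hlt | heq
    · have hb : (j : ℕ) < N := j.isLt
      nlinarith
    · rw [heq]
      have : (j : ℕ) < (j' : ℕ) := hjj'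
      omega
end

section
/- Let n ≥ 1 and let D_1 = αβγ and D_2 = αβ*γ be decks of 2n cards, each with exactly n cards labeled 1 and n labeled 2, where α, β, γ are segments with |α| = |γ|, the segment β contains equally many 1's and 2's, and β* is obtained from β by reversing its order and then replacing every 1 by 2 and every 2 by 1. Then for every d ≥ 0, the number of shuffles π from the sorted deck 1^n, 2^n to D_1 with des(π) = d equals the number of shuffles from 1^n, 2^n to D_2 with des(π) = d. Consequently, for every integer a ≥ 1 the a-shuffle transition probabilities from 1^n, 2^n to D_1 and to D_2 are equal. -/
open Finset

namespace Stmt11Aux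

variable {m : ℕ}

def cnt (s : Finset (Fin m)) (c : ℕ) : ℕ := (s.filter (fun y : Fin m => (y : ℕ) < c)).card

def rk (s : Finset (Fin m)) (x : Fin m) : ℕ := cnt s (x : ℕ)

lemma cnt_mono (s : Finset (Fin m)) {c c' : ℕ} (h : c ≤ c') : cnt s c ≤ cnt s c' := by
  apply Finset.card_le_card
  intro y hy
  simp only [mem_filter] at *
  exact ⟨hy.1, lt_of_lt_of_le hy.2 h⟩

lemma cnt_lt_cnt (s : Finset (Fin m)) {x : Fin m} (hx : x ∈ s) {c c' : ℕ}
    (h1 : c ≤ (x : ℕ)) (h2 : (x : ℕ) < c') : cnt s c < cnt s c' := by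
  apply Finset.card_lt_card
  constructor
  · intro y hy
    simp only [mem_filter] at *
    exact ⟨hy.1, by omega⟩
  · intro hsub
    have := hsub (mem_filter.mpr ⟨hx, h2⟩)
    simp only [mem_filter] at this
    omega

lemma rk_lt_card {s : Finset (Fin m)} {x : Fin m} (hx : x ∈ s) : rk s x < s.card := by
  apply Finset.card_lt_card
  constructor
  · exact filter_subset _ _
  · intro hsub
    have := hsub hx
    simp only [mem_filter] at this
    omega

lemma rk_lt_rk {s : Finset (Fin m)} {x y : Fin m} (hx : x ∈ s) (h : (x : ℕ) < (y : ℕ)) :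
    rk s x < rk s y := cnt_lt_cnt s hx le_rfl h

lemma rk_lt_iff {s : Finset (Fin m)} {x y : Fin m} (hx : x ∈ s) (hy : y ∈ s) :
    rk s x < rk s y ↔ (x : ℕ) < (y : ℕ) := by
  constructor
  · intro h
    by_contra hc
    push_neg at hc
    rcases Nat.lt_or_ge (y : ℕ) (x : ℕ) with h' | h'
    · exact absurd (rk_lt_rk hy h') (by omega)
    · have : (x : ℕ) = (y : ℕ) := by omega
      rw [rk, rk, this] at h
      omega
  · exact fun h => rk_lt_rk hx h

lemma rk_inj {s : Finset (Fin m)} {x y : Fin m} (hx : x ∈ s) (hy : y ∈ s)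
    (h : rk s x = rk s y) : x = y := by
  rcases Nat.lt_trichotomy (x : ℕ) (y : ℕ) with h' | h' | h'
  · exact absurd (rk_lt_rk hx h') (by omega)
  · exact Fin.ext h'
  · exact absurd (rk_lt_rk hy h') (by omega)

lemma region_iff {s : Finset (Fin m)} {x : Fin m} (hx : x ∈ s) (c : ℕ) :
    (x : ℕ) < c ↔ rk s x < cnt s c := by
  constructor
  · exact fun h => cnt_lt_cnt s hx le_rfl h
  · intro h
    rw [rk] at h
    by_contra hc
    push_neg at hc
    exact absurd (cnt_mono s hc) (by omega)

lemma part (s : Finset (Fin m)) {c c' : ℕ} (h : c ≤ c') :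
    cnt s c' = cnt s c + (s.filter (fun y : Fin m => c ≤ (y : ℕ) ∧ (y : ℕ) < c')).card := by
  rw [cnt, cnt, ← Finset.card_union_of_disjoint]
  · congr 1
    ext y
    simp only [mem_union, mem_filter]
    constructor
    · rintro ⟨hy, h2⟩
      by_cases hcy : (y : ℕ) < c
      · exact Or.inl ⟨hy, hcy⟩
      · exact Or.inr ⟨hy, by omega, h2⟩
    · rintro (⟨hy, h2⟩ | ⟨hy, h2, h3⟩)
      · exact ⟨hy, by omega⟩
      · exact ⟨hy, h3⟩
  · rw [Finset.disjoint_left]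
    intro y hy hy'
    simp only [mem_filter] at hy hy'
    omega

lemma cnt_univ (c : ℕ) (hc : c ≤ m) : cnt (univ : Finset (Fin m)) c = c := by
  rcases Nat.eq_zero_or_pos c with rfl | hcpos
  · rw [cnt]
    simp
  · have hm : 0 < m := lt_of_lt_of_le hcpos hc
    rw [cnt, ← Finset.card_range c]
    apply Finset.card_nbij' (i := fun y : Fin m => (y : ℕ)) (j := fun a => (⟨a % m, Nat.mod_lt _ hm⟩ : Fin m))
    · intro y hy
      simp only [Finset.mem_coe, mem_filter, Finset.card_range] at hy
      exact mem_range.mpr hy.2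
    · intro a ha
      simp only [Finset.mem_coe, mem_range] at ha
      simp only [mem_filter, mem_univ, true_and]
      have : a % m = a := Nat.mod_eq_of_lt (lt_of_lt_of_le ha hc)
      simp [this, ha]
    · intro y _
      apply Fin.ext
      simp [Nat.mod_eq_of_lt y.isLt]
    · intro a ha
      simp only [Finset.mem_coe, mem_range] at ha
      simp [Nat.mod_eq_of_lt (lt_of_lt_of_le ha hc)]

lemma cnt_top {s : Finset (Fin m)} : cnt s m = s.card := by
  rw [cnt]
  congr 1
  apply Finset.filter_true_of_mem
  intro y _
  exact y.isLt

variable {k : ℕ}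

lemma rk_orderEmb (s : Finset (Fin m)) (hs : s.card = k) (i : Fin k) :
    rk s (s.orderEmbOfFin hs i) = (i : ℕ) := by
  have hrange : ∀ z ∈ s, ∃ j : Fin k, s.orderEmbOfFin hs j = z := by
    intro z hz
    have : z ∈ Set.range (s.orderEmbOfFin hs) := by
      rw [Finset.range_orderEmbOfFin]; exact hz
    exact this
  have hfilt : s.filter (fun y : Fin m => (y : ℕ) < ((s.orderEmbOfFin hs i : Fin m) : ℕ))
      = (univ.filter (fun j : Fin k => (j : ℕ) < (i : ℕ))).image (s.orderEmbOfFin hs) := by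
    ext z
    simp only [mem_filter, mem_image, mem_univ, true_and]
    constructor
    · rintro ⟨hz, hlt⟩
      obtain ⟨j, rfl⟩ := hrange z hz
      refine ⟨j, ?_, rfl⟩
      have := (s.orderEmbOfFin hs).lt_iff_lt (a := j) (b := i)
      rw [Fin.lt_def, Fin.lt_def] at this
      exact this.mp hlt
    · rintro ⟨j, hj, rfl⟩
      refine ⟨Finset.orderEmbOfFin_mem s hs j, ?_⟩
      have := (s.orderEmbOfFin hs).lt_iff_lt (a := j) (b := i)
      rw [Fin.lt_def, Fin.lt_def] at this
      exact this.mpr hj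
  rw [rk, cnt, hfilt, Finset.card_image_of_injective _ (s.orderEmbOfFin hs).injective]
  have := cnt_univ (m := k) (i : ℕ) (le_of_lt i.isLt)
  rw [cnt] at this
  exact this

lemma orderEmb_rk {s : Finset (Fin m)} (hs : s.card = k) {x : Fin m} (hx : x ∈ s)
    (h : rk s x < k) : s.orderEmbOfFin hs ⟨rk s x, h⟩ = x := by
  apply rk_inj (Finset.orderEmbOfFin_mem s hs _) hx
  rw [rk_orderEmb]



/-! ### Core deck constructions -/

def ones (n : ℕ) (D : Fin (2*n) → ℕ) : Finset (Fin (2*n)) :=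
  univ.filter fun i => D i = 1

def twos (n : ℕ) (D : Fin (2*n) → ℕ) : Finset (Fin (2*n)) :=
  univ.filter fun i => D i = 2

lemma mem_ones {n : ℕ} {D : Fin (2*n) → ℕ} {x : Fin (2*n)} : x ∈ ones n D ↔ D x = 1 := by
  simp [ones]

lemma mem_twos {n : ℕ} {D : Fin (2*n) → ℕ} {x : Fin (2*n)} : x ∈ twos n D ↔ D x = 2 := by
  simp [twos]

structure Pkg (n p q : ℕ) (D E : Fin (2*n) → ℕ) : Prop where
  hn : 1 ≤ n
  hlen : 2*n = p+q+p
  hDlab : ∀ i, D i = 1 ∨ D i = 2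
  hElab : ∀ i, E i = 1 ∨ E i = 2
  hA : (ones n D).card = n
  hB : (twos n D).card = n
  hA' : (ones n E).card = n
  hB' : (twos n E).card = n
  hAq : ((ones n D).filter (fun i : Fin (2*n) => p ≤ (i:ℕ) ∧ (i:ℕ) < p+q)).card = n - p
  hBq : ((twos n D).filter (fun i : Fin (2*n) => p ≤ (i:ℕ) ∧ (i:ℕ) < p+q)).card = n - p
  hA'q : ((ones n E).filter (fun i : Fin (2*n) => p ≤ (i:ℕ) ∧ (i:ℕ) < p+q)).card = n - p
  hB'q : ((twos n E).filter (fun i : Fin (2*n) => p ≤ (i:ℕ) ∧ (i:ℕ) < p+q)).card = n - p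
  hag : ∀ i : Fin (2*n), ((i:ℕ) < p ∨ p+q ≤ (i:ℕ)) → E i = D i
  hstar : ∀ i j : Fin (2*n), p ≤ (i:ℕ) → (i:ℕ) < p+q → p ≤ (j:ℕ) → (j:ℕ) < p+q →
    (i:ℕ)+(j:ℕ) = 2*p+q-1 → E i = 3 - D j

namespace Pkg

variable {n p q : ℕ} {D E : Fin (2*n) → ℕ}

lemma pn (P : Pkg n p q D E) : p ≤ n := by have := P.hlen; omega

lemma symm (P : Pkg n p q D E) : Pkg n p q E D where
  hn := P.hn
  hlen := P.hlen
  hDlab := P.hElab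
  hElab := P.hDlab
  hA := P.hA'
  hB := P.hB'
  hA' := P.hA
  hB' := P.hB
  hAq := P.hA'q
  hBq := P.hB'q
  hA'q := P.hAq
  hB'q := P.hBq
  hag := fun i hi => (P.hag i hi).symm
  hstar := by
    intro i j h1 h2 h3 h4 h5
    have h6 := P.hstar j i h3 h4 h1 h2 (by omega)
    rcases P.hDlab i with h7 | h7 <;> omega

end Pkg

/-- The reversal map on the middle block. -/
def tau (n p q : ℕ) (hlen : 2*n = p+q+p) : Fin (2*n) → Fin (2*n) := fun x =>
  if h : p ≤ (x:ℕ) ∧ (x:ℕ) < p+q then ⟨2*p+q-1-(x:ℕ), by omega⟩ else x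

lemma tau_val {n p q : ℕ} {hlen : 2*n = p+q+p} {x : Fin (2*n)}
    (h : p ≤ (x:ℕ) ∧ (x:ℕ) < p+q) : ((tau n p q hlen x : Fin (2*n)) : ℕ) = 2*p+q-1-(x:ℕ) := by
  rw [tau, dif_pos h]

section Maps

variable {n p q : ℕ} {D E : Fin (2*n) → ℕ}

/-- The rank-preserving recoding of values. -/
def f0 (P : Pkg n p q D E) : Fin (2*n) → Fin (2*n) := fun x =>
  if h : D x = 1 then
    (ones n E).orderEmbOfFin P.hA'
      ⟨rk (ones n D) x, by have h1 := rk_lt_card (mem_ones.mpr h); have h2 := P.hA; omega⟩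
  else
    (twos n E).orderEmbOfFin P.hB'
      ⟨rk (twos n D) x, by
        have h1 := rk_lt_card (mem_twos.mpr ((P.hDlab x).resolve_left h))
        have h2 := P.hB; omega⟩

/-- The rank-reversing, label-swapping recoding of values. -/
def f1 (P : Pkg n p q D E) : Fin (2*n) → Fin (2*n) := fun x =>
  if h : D x = 1 then
    (twos n E).orderEmbOfFin P.hB' ⟨n - 1 - rk (ones n D) x, by have := P.hn; omega⟩
  else
    (ones n E).orderEmbOfFin P.hA' ⟨n - 1 - rk (twos n D) x, by have := P.hn; omega⟩

variable (P : Pkg n p q D E)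

lemma f0_lab1 {x : Fin (2*n)} (hx : D x = 1) : E (f0 P x) = 1 := by
  rw [f0, dif_pos hx]
  exact mem_ones.mp (Finset.orderEmbOfFin_mem _ _ _)

lemma f0_lab2 {x : Fin (2*n)} (hx : D x = 2) : E (f0 P x) = 2 := by
  rw [f0, dif_neg (by omega)]
  exact mem_twos.mp (Finset.orderEmbOfFin_mem _ _ _)

lemma f1_lab1 {x : Fin (2*n)} (hx : D x = 1) : E (f1 P x) = 2 := by
  rw [f1, dif_pos hx]
  exact mem_twos.mp (Finset.orderEmbOfFin_mem _ _ _)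

lemma f1_lab2 {x : Fin (2*n)} (hx : D x = 2) : E (f1 P x) = 1 := by
  rw [f1, dif_neg (by omega)]
  exact mem_ones.mp (Finset.orderEmbOfFin_mem _ _ _)

lemma f0_lt_iff_ones {x y : Fin (2*n)} (hx : D x = 1) (hy : D y = 1) :
    f0 P x < f0 P y ↔ x < y := by
  simp only [f0]
  rw [dif_pos hx, dif_pos hy, OrderEmbedding.lt_iff_lt, Fin.mk_lt_mk,
    rk_lt_iff (mem_ones.mpr hx) (mem_ones.mpr hy), Fin.lt_def]

lemma f0_lt_iff_twos {x y : Fin (2*n)} (hx : D x = 2) (hy : D y = 2) :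
    f0 P x < f0 P y ↔ x < y := by
  simp only [f0]
  rw [dif_neg (by omega : ¬ D x = 1), dif_neg (by omega : ¬ D y = 1),
    OrderEmbedding.lt_iff_lt, Fin.mk_lt_mk,
    rk_lt_iff (mem_twos.mpr hx) (mem_twos.mpr hy), Fin.lt_def]

lemma f1_lt_iff_ones {x y : Fin (2*n)} (hx : D x = 1) (hy : D y = 1) :
    f1 P x < f1 P y ↔ y < x := by
  have hx' := mem_ones.mpr hx
  have hy' := mem_ones.mpr hy
  have bx := rk_lt_card hx'
  have by' := rk_lt_card hy'
  have hcard := P.hA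
  simp only [f1]
  rw [dif_pos hx, dif_pos hy, OrderEmbedding.lt_iff_lt, Fin.mk_lt_mk]
  rw [Fin.lt_def, ← rk_lt_iff hy' hx']
  omega

lemma f1_lt_iff_twos {x y : Fin (2*n)} (hx : D x = 2) (hy : D y = 2) :
    f1 P x < f1 P y ↔ y < x := by
  have hx' := mem_twos.mpr hx
  have hy' := mem_twos.mpr hy
  have bx := rk_lt_card hx'
  have by' := rk_lt_card hy'
  have hcard := P.hB
  simp only [f1]
  rw [dif_neg (by omega : ¬ D x = 1), dif_neg (by omega : ¬ D y = 1),
    OrderEmbedding.lt_iff_lt, Fin.mk_lt_mk]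
  rw [Fin.lt_def, ← rk_lt_iff hy' hx']
  omega

end Maps

end Stmt11Aux

namespace Stmt11Aux

section Counting

variable {n p q : ℕ} {D E : Fin (2*n) → ℕ}

lemma cnt_ones_flank (P : Pkg n p q D E) {c : ℕ} (hc : c ≤ p) :
    cnt (ones n E) c = cnt (ones n D) c := by
  unfold cnt
  congr 1
  ext z
  simp only [mem_filter, mem_ones]
  constructor
  · rintro ⟨h1, h2⟩
    rw [P.hag z (Or.inl (by omega))] at h1
    exact ⟨h1, h2⟩
  · rintro ⟨h1, h2⟩
    rw [P.hag z (Or.inl (by omega))]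
    exact ⟨h1, h2⟩

lemma cnt_twos_flank (P : Pkg n p q D E) {c : ℕ} (hc : c ≤ p) :
    cnt (twos n E) c = cnt (twos n D) c := by
  unfold cnt
  congr 1
  ext z
  simp only [mem_filter, mem_twos]
  constructor
  · rintro ⟨h1, h2⟩
    rw [P.hag z (Or.inl (by omega))] at h1
    exact ⟨h1, h2⟩
  · rintro ⟨h1, h2⟩
    rw [P.hag z (Or.inl (by omega))]
    exact ⟨h1, h2⟩

lemma cnt_ones_pq (P : Pkg n p q D E) :
    cnt (ones n D) (p+q) = cnt (ones n D) p + (n - p) := by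
  rw [part (ones n D) (Nat.le_add_right p q), P.hAq]

lemma cnt_twos_pq (P : Pkg n p q D E) :
    cnt (twos n D) (p+q) = cnt (twos n D) p + (n - p) := by
  rw [part (twos n D) (Nat.le_add_right p q), P.hBq]

lemma cnt_ones_pq' (P : Pkg n p q D E) :
    cnt (ones n E) (p+q) = cnt (ones n E) p + (n - p) := by
  rw [part (ones n E) (Nat.le_add_right p q), P.hA'q]

lemma cnt_twos_pq' (P : Pkg n p q D E) :
    cnt (twos n E) (p+q) = cnt (twos n E) p + (n - p) := by
  rw [part (twos n E) (Nat.le_add_right p q), P.hB'q]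

lemma cnt_flank_sum (P : Pkg n p q D E) :
    cnt (ones n D) p + cnt (twos n D) p = p := by
  have hps : p ≤ 2*n := by have := P.hlen; omega
  have hu : cnt (univ : Finset (Fin (2*n))) p = p := cnt_univ p hps
  conv_rhs => rw [← hu]
  unfold cnt
  rw [← Finset.card_union_of_disjoint]
  · congr 1
    ext z
    simp only [mem_union, mem_filter, mem_ones, mem_twos, mem_univ, true_and]
    constructor
    · rintro (⟨h1, h2⟩ | ⟨h1, h2⟩) <;> exact h2
    · intro h2
      rcases P.hDlab z with h1 | h1
      · exact Or.inl ⟨h1, h2⟩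
      · exact Or.inr ⟨h1, h2⟩
  · rw [Finset.disjoint_left]
    intro z hz hz'
    simp only [mem_filter, mem_ones, mem_twos] at hz hz'
    omega

lemma f0_rk_ones (P : Pkg n p q D E) {x : Fin (2*n)} (hx : D x = 1) :
    rk (ones n E) (f0 P x) = rk (ones n D) x := by
  simp only [f0]
  rw [dif_pos hx, rk_orderEmb]

lemma f0_rk_twos (P : Pkg n p q D E) {x : Fin (2*n)} (hx : D x = 2) :
    rk (twos n E) (f0 P x) = rk (twos n D) x := by
  simp only [f0]
  rw [dif_neg (by omega : ¬ D x = 1), rk_orderEmb]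

lemma f0_region_ones (P : Pkg n p q D E) {x : Fin (2*n)} (hx : D x = 1) :
    ((x:ℕ) < p ↔ ((f0 P x : Fin (2*n)):ℕ) < p) ∧
      ((x:ℕ) < p+q ↔ ((f0 P x : Fin (2*n)):ℕ) < p+q) := by
  have hx' : x ∈ ones n D := mem_ones.mpr hx
  have hfx' : f0 P x ∈ ones n E := mem_ones.mpr (f0_lab1 P hx)
  have hrk := f0_rk_ones P hx
  constructor
  · rw [region_iff hx' p, region_iff hfx' p, hrk, cnt_ones_flank P le_rfl]
  · rw [region_iff hx' (p+q), region_iff hfx' (p+q), hrk, cnt_ones_pq' P,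
      cnt_ones_pq P, cnt_ones_flank P le_rfl]

lemma f0_region_twos (P : Pkg n p q D E) {x : Fin (2*n)} (hx : D x = 2) :
    ((x:ℕ) < p ↔ ((f0 P x : Fin (2*n)):ℕ) < p) ∧
      ((x:ℕ) < p+q ↔ ((f0 P x : Fin (2*n)):ℕ) < p+q) := by
  have hx' : x ∈ twos n D := mem_twos.mpr hx
  have hfx' : f0 P x ∈ twos n E := mem_twos.mpr (f0_lab2 P hx)
  have hrk := f0_rk_twos P hx
  constructor
  · rw [region_iff hx' p, region_iff hfx' p, hrk, cnt_twos_flank P le_rfl]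
  · rw [region_iff hx' (p+q), region_iff hfx' (p+q), hrk, cnt_twos_pq' P,
      cnt_twos_pq P, cnt_twos_flank P le_rfl]

lemma f0_fix_ones (P : Pkg n p q D E) {x : Fin (2*n)} (hx : D x = 1)
    (hout : ¬(p ≤ (x:ℕ) ∧ (x:ℕ) < p+q)) : f0 P x = x := by
  have hxE : x ∈ ones n E := mem_ones.mpr (by rw [P.hag x (by omega)]; exact hx)
  have hrkE : rk (ones n E) x = rk (ones n D) x := by
    rcases Nat.lt_or_ge (x:ℕ) p with hlo | hhi
    · exact cnt_ones_flank P (le_of_lt hlo)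
    · have hpq : p + q ≤ (x:ℕ) := by omega
      have hhigh : (ones n E).filter (fun y : Fin (2*n) => p+q ≤ (y:ℕ) ∧ (y:ℕ) < (x:ℕ))
          = (ones n D).filter (fun y : Fin (2*n) => p+q ≤ (y:ℕ) ∧ (y:ℕ) < (x:ℕ)) := by
        ext z
        simp only [mem_filter, mem_ones]
        constructor
        · rintro ⟨h1, h2⟩
          rw [P.hag z (Or.inr h2.1)] at h1
          exact ⟨h1, h2⟩
        · rintro ⟨h1, h2⟩
          rw [P.hag z (Or.inr h2.1)]
          exact ⟨h1, h2⟩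
      rw [rk, rk, part (ones n E) hpq, part (ones n D) hpq, hhigh,
        cnt_ones_pq' P, cnt_ones_pq P, cnt_ones_flank P le_rfl]
  simp only [f0]
  rw [dif_pos hx]
  refine rk_inj (Finset.orderEmbOfFin_mem _ _ _) hxE ?_
  rw [rk_orderEmb, hrkE]

lemma f0_fix_twos (P : Pkg n p q D E) {x : Fin (2*n)} (hx : D x = 2)
    (hout : ¬(p ≤ (x:ℕ) ∧ (x:ℕ) < p+q)) : f0 P x = x := by
  have hxE : x ∈ twos n E := mem_twos.mpr (by rw [P.hag x (by omega)]; exact hx)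
  have hrkE : rk (twos n E) x = rk (twos n D) x := by
    rcases Nat.lt_or_ge (x:ℕ) p with hlo | hhi
    · exact cnt_twos_flank P (le_of_lt hlo)
    · have hpq : p + q ≤ (x:ℕ) := by omega
      have hhigh : (twos n E).filter (fun y : Fin (2*n) => p+q ≤ (y:ℕ) ∧ (y:ℕ) < (x:ℕ))
          = (twos n D).filter (fun y : Fin (2*n) => p+q ≤ (y:ℕ) ∧ (y:ℕ) < (x:ℕ)) := by
        ext z
        simp only [mem_filter, mem_twos]
        constructor
        · rintro ⟨h1, h2⟩
          rw [P.hag z (Or.inr h2.1)] at h1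
          exact ⟨h1, h2⟩
        · rintro ⟨h1, h2⟩
          rw [P.hag z (Or.inr h2.1)]
          exact ⟨h1, h2⟩
      rw [rk, rk, part (twos n E) hpq, part (twos n D) hpq, hhigh,
        cnt_twos_pq' P, cnt_twos_pq P, cnt_twos_flank P le_rfl]
  simp only [f0]
  rw [dif_neg (by omega : ¬ D x = 1)]
  refine rk_inj (Finset.orderEmbOfFin_mem _ _ _) hxE ?_
  rw [rk_orderEmb, hrkE]

end Counting

end Stmt11Aux

namespace Stmt11Aux

section TauSec

variable {n p q : ℕ} {D E : Fin (2*n) → ℕ}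

lemma tau_invol {n p q : ℕ} (hlen : 2*n = p+q+p) {x : Fin (2*n)}
    (h : p ≤ (x:ℕ) ∧ (x:ℕ) < p+q) : tau n p q hlen (tau n p q hlen x) = x := by
  have h1 := tau_val (hlen := hlen) h
  have h2 : p ≤ (tau n p q hlen x : ℕ) ∧ (tau n p q hlen x : ℕ) < p+q := by omega
  apply Fin.ext
  rw [tau_val h2, h1]
  omega

lemma f1_eq_tau_ones (P : Pkg n p q D E) {x : Fin (2*n)} (hx : D x = 1)
    (hxβ : p ≤ (x:ℕ) ∧ (x:ℕ) < p+q) : f1 P x = tau n p q P.hlen x := by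
  set t := tau n p q P.hlen x with ht
  have htv : (t:ℕ) = 2*p+q-1-(x:ℕ) := tau_val hxβ
  have htβ : p ≤ (t:ℕ) ∧ (t:ℕ) < p+q := by omega
  have hstar1 := P.hstar t x htβ.1 htβ.2 hxβ.1 hxβ.2 (by omega)
  have htE : E t = 2 := by omega
  have htmem : t ∈ twos n E := mem_twos.mpr htE
  have hxmem : x ∈ ones n D := mem_ones.mpr hx
  have hbij : ((twos n E).filter (fun z : Fin (2*n) => p ≤ (z:ℕ) ∧ (z:ℕ) < (t:ℕ))).card
      = ((ones n D).filter (fun z : Fin (2*n) => (x:ℕ)+1 ≤ (z:ℕ) ∧ (z:ℕ) < p+q)).card := by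
    apply Finset.card_nbij' (i := tau n p q P.hlen) (j := tau n p q P.hlen)
    · intro z hz
      simp only [Finset.mem_coe, mem_filter, mem_twos] at hz
      obtain ⟨hz1, hz2, hz3⟩ := hz
      have hzβ : p ≤ (z:ℕ) ∧ (z:ℕ) < p+q := by omega
      have hzv := tau_val (hlen := P.hlen) hzβ
      have hzβ' : p ≤ (tau n p q P.hlen z : ℕ) ∧ (tau n p q P.hlen z : ℕ) < p+q := by omega
      have hs := P.hstar z (tau n p q P.hlen z) hzβ.1 hzβ.2 hzβ'.1 hzβ'.2 (by omega)
      have hd : D (tau n p q P.hlen z) = 1 := by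
        rcases P.hDlab (tau n p q P.hlen z) with h | h
        · exact h
        · omega
      simp only [Finset.mem_coe, mem_filter, mem_ones]
      exact ⟨hd, by omega, by omega⟩
    · intro z hz
      simp only [Finset.mem_coe, mem_filter, mem_ones] at hz
      obtain ⟨hz1, hz2, hz3⟩ := hz
      have hzβ : p ≤ (z:ℕ) ∧ (z:ℕ) < p+q := by omega
      have hzv := tau_val (hlen := P.hlen) hzβ
      have hzβ' : p ≤ (tau n p q P.hlen z : ℕ) ∧ (tau n p q P.hlen z : ℕ) < p+q := by omega
      have hs := P.hstar (tau n p q P.hlen z) z hzβ'.1 hzβ'.2 hzβ.1 hzβ.2 (by omega)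
      simp only [Finset.mem_coe, mem_filter, mem_twos]
      refine ⟨by omega, by omega, by omega⟩
    · intro z hz
      simp only [Finset.mem_coe, mem_filter, mem_twos] at hz
      exact tau_invol P.hlen (by omega)
    · intro z hz
      simp only [Finset.mem_coe, mem_filter, mem_ones] at hz
      exact tau_invol P.hlen (by omega)
  have e1 : cnt (ones n D) ((x:ℕ)+1) = rk (ones n D) x + 1 := by
    rw [part (ones n D) (show (x:ℕ) ≤ (x:ℕ)+1 by omega)]
    have hsing : (ones n D).filter (fun y : Fin (2*n) => (x:ℕ) ≤ (y:ℕ) ∧ (y:ℕ) < (x:ℕ)+1)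
        = {x} := by
      ext z
      simp only [mem_filter, mem_ones, mem_singleton]
      constructor
      · rintro ⟨h1, h2, h3⟩
        exact Fin.ext (by omega)
      · rintro rfl
        exact ⟨hx, le_rfl, by omega⟩
    rw [hsing, card_singleton, rk]
  have e2 : cnt (ones n D) (p+q) = cnt (ones n D) ((x:ℕ)+1) +
      ((ones n D).filter (fun z : Fin (2*n) => (x:ℕ)+1 ≤ (z:ℕ) ∧ (z:ℕ) < p+q)).card :=
    part (ones n D) (by omega)
  have e3 : rk (twos n E) t = cnt (twos n E) p +
      ((twos n E).filter (fun z : Fin (2*n) => p ≤ (z:ℕ) ∧ (z:ℕ) < (t:ℕ))).card := by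
    rw [rk]
    exact part (twos n E) htβ.1
  have e4 := cnt_twos_flank P (le_rfl)
  have e5 := cnt_flank_sum P
  have e6 := cnt_ones_pq P
  have e7 : rk (ones n D) x < cnt (ones n D) (p+q) := (region_iff hxmem (p+q)).mp (by omega)
  have e8 := P.pn
  have e9 := P.hn
  have hrk : rk (twos n E) t = n - 1 - rk (ones n D) x := by omega
  simp only [f1]
  rw [dif_pos hx]
  refine rk_inj (Finset.orderEmbOfFin_mem _ _ _) htmem ?_
  rw [rk_orderEmb, hrk]

lemma f1_eq_tau_twos (P : Pkg n p q D E) {x : Fin (2*n)} (hx : D x = 2)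
    (hxβ : p ≤ (x:ℕ) ∧ (x:ℕ) < p+q) : f1 P x = tau n p q P.hlen x := by
  set t := tau n p q P.hlen x with ht
  have htv : (t:ℕ) = 2*p+q-1-(x:ℕ) := tau_val hxβ
  have htβ : p ≤ (t:ℕ) ∧ (t:ℕ) < p+q := by omega
  have hstar1 := P.hstar t x htβ.1 htβ.2 hxβ.1 hxβ.2 (by omega)
  have htE : E t = 1 := by omega
  have htmem : t ∈ ones n E := mem_ones.mpr htE
  have hxmem : x ∈ twos n D := mem_twos.mpr hx
  have hbij : ((ones n E).filter (fun z : Fin (2*n) => p ≤ (z:ℕ) ∧ (z:ℕ) < (t:ℕ))).card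
      = ((twos n D).filter (fun z : Fin (2*n) => (x:ℕ)+1 ≤ (z:ℕ) ∧ (z:ℕ) < p+q)).card := by
    apply Finset.card_nbij' (i := tau n p q P.hlen) (j := tau n p q P.hlen)
    · intro z hz
      simp only [Finset.mem_coe, mem_filter, mem_ones] at hz
      obtain ⟨hz1, hz2, hz3⟩ := hz
      have hzβ : p ≤ (z:ℕ) ∧ (z:ℕ) < p+q := by omega
      have hzv := tau_val (hlen := P.hlen) hzβ
      have hzβ' : p ≤ (tau n p q P.hlen z : ℕ) ∧ (tau n p q P.hlen z : ℕ) < p+q := by omega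
      have hs := P.hstar z (tau n p q P.hlen z) hzβ.1 hzβ.2 hzβ'.1 hzβ'.2 (by omega)
      have hd : D (tau n p q P.hlen z) = 2 := by
        rcases P.hDlab (tau n p q P.hlen z) with h | h
        · omega
        · exact h
      simp only [Finset.mem_coe, mem_filter, mem_twos]
      exact ⟨hd, by omega, by omega⟩
    · intro z hz
      simp only [Finset.mem_coe, mem_filter, mem_twos] at hz
      obtain ⟨hz1, hz2, hz3⟩ := hz
      have hzβ : p ≤ (z:ℕ) ∧ (z:ℕ) < p+q := by omega
      have hzv := tau_val (hlen := P.hlen) hzβ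
      have hzβ' : p ≤ (tau n p q P.hlen z : ℕ) ∧ (tau n p q P.hlen z : ℕ) < p+q := by omega
      have hs := P.hstar (tau n p q P.hlen z) z hzβ'.1 hzβ'.2 hzβ.1 hzβ.2 (by omega)
      simp only [Finset.mem_coe, mem_filter, mem_ones]
      refine ⟨by omega, by omega, by omega⟩
    · intro z hz
      simp only [Finset.mem_coe, mem_filter, mem_ones] at hz
      exact tau_invol P.hlen (by omega)
    · intro z hz
      simp only [Finset.mem_coe, mem_filter, mem_twos] at hz
      exact tau_invol P.hlen (by omega)
  have e1 : cnt (twos n D) ((x:ℕ)+1) = rk (twos n D) x + 1 := by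
    rw [part (twos n D) (show (x:ℕ) ≤ (x:ℕ)+1 by omega)]
    have hsing : (twos n D).filter (fun y : Fin (2*n) => (x:ℕ) ≤ (y:ℕ) ∧ (y:ℕ) < (x:ℕ)+1)
        = {x} := by
      ext z
      simp only [mem_filter, mem_twos, mem_singleton]
      constructor
      · rintro ⟨h1, h2, h3⟩
        exact Fin.ext (by omega)
      · rintro rfl
        exact ⟨hx, le_rfl, by omega⟩
    rw [hsing, card_singleton, rk]
  have e2 : cnt (twos n D) (p+q) = cnt (twos n D) ((x:ℕ)+1) +
      ((twos n D).filter (fun z : Fin (2*n) => (x:ℕ)+1 ≤ (z:ℕ) ∧ (z:ℕ) < p+q)).card :=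
    part (twos n D) (by omega)
  have e3 : rk (ones n E) t = cnt (ones n E) p +
      ((ones n E).filter (fun z : Fin (2*n) => p ≤ (z:ℕ) ∧ (z:ℕ) < (t:ℕ))).card := by
    rw [rk]
    exact part (ones n E) htβ.1
  have e4 := cnt_ones_flank P (le_rfl)
  have e5 := cnt_flank_sum P
  have e6 := cnt_twos_pq P
  have e7 : rk (twos n D) x < cnt (twos n D) (p+q) := (region_iff hxmem (p+q)).mp (by omega)
  have e8 := P.pn
  have e9 := P.hn
  have hrk : rk (ones n E) t = n - 1 - rk (twos n D) x := by omega
  simp only [f1]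
  rw [dif_neg (by omega : ¬ D x = 1)]
  refine rk_inj (Finset.orderEmbOfFin_mem _ _ _) htmem ?_
  rw [rk_orderEmb, hrk]

lemma f0_cross (P : Pkg n p q D E) {x y : Fin (2*n)} (hx : D x = 1) (hy : D y = 2)
    (hnb : ¬((p ≤ (x:ℕ) ∧ (x:ℕ) < p+q) ∧ (p ≤ (y:ℕ) ∧ (y:ℕ) < p+q))) :
    f0 P y < f0 P x ↔ y < x := by
  by_cases hxβ : p ≤ (x:ℕ) ∧ (x:ℕ) < p+q
  · have hyβ : ¬(p ≤ (y:ℕ) ∧ (y:ℕ) < p+q) := fun h => hnb ⟨hxβ, h⟩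
    have hfy : f0 P y = y := f0_fix_twos P hy hyβ
    have hreg := f0_region_ones P hx
    rw [hfy, Fin.lt_def, Fin.lt_def]
    omega
  · by_cases hyβ : p ≤ (y:ℕ) ∧ (y:ℕ) < p+q
    · have hfx : f0 P x = x := f0_fix_ones P hx hxβ
      have hreg := f0_region_twos P hy
      rw [hfx, Fin.lt_def, Fin.lt_def]
      omega
    · rw [f0_fix_ones P hx hxβ, f0_fix_twos P hy hyβ]

lemma f0_injective (P : Pkg n p q D E) : Function.Injective (f0 P) := by
  intro x y h
  rcases P.hDlab x with hx | hx <;> rcases P.hDlab y with hy | hy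
  · have h1 : rk (ones n E) (f0 P x) = rk (ones n D) x := f0_rk_ones P hx
    have h2 : rk (ones n E) (f0 P y) = rk (ones n D) y := f0_rk_ones P hy
    rw [h] at h1
    exact rk_inj (mem_ones.mpr hx) (mem_ones.mpr hy) (by omega)
  · have h1 := f0_lab1 P hx
    have h2 := f0_lab2 P hy
    rw [h] at h1
    omega
  · have h1 := f0_lab2 P hx
    have h2 := f0_lab1 P hy
    rw [h] at h1
    omega
  · have h1 : rk (twos n E) (f0 P x) = rk (twos n D) x := f0_rk_twos P hx
    have h2 : rk (twos n E) (f0 P y) = rk (twos n D) y := f0_rk_twos P hy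
    rw [h] at h1
    exact rk_inj (mem_twos.mpr hx) (mem_twos.mpr hy) (by omega)

lemma f1_rk_ones (P : Pkg n p q D E) {x : Fin (2*n)} (hx : D x = 1) :
    rk (twos n E) (f1 P x) = n - 1 - rk (ones n D) x := by
  simp only [f1]
  rw [dif_pos hx, rk_orderEmb]

lemma f1_rk_twos (P : Pkg n p q D E) {x : Fin (2*n)} (hx : D x = 2) :
    rk (ones n E) (f1 P x) = n - 1 - rk (twos n D) x := by
  simp only [f1]
  rw [dif_neg (by omega : ¬ D x = 1), rk_orderEmb]

lemma f1_injective (P : Pkg n p q D E) : Function.Injective (f1 P) := by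
  intro x y h
  rcases P.hDlab x with hx | hx <;> rcases P.hDlab y with hy | hy
  · have h1 := f1_rk_ones P hx
    have h2 := f1_rk_ones P hy
    have b1 : rk (ones n D) x < n := by
      have := rk_lt_card (mem_ones.mpr hx); have := P.hA; omega
    have b2 : rk (ones n D) y < n := by
      have := rk_lt_card (mem_ones.mpr hy); have := P.hA; omega
    have := P.hn
    rw [h] at h1
    exact rk_inj (mem_ones.mpr hx) (mem_ones.mpr hy) (by omega)
  · have h1 := f1_lab1 P hx
    have h2 := f1_lab2 P hy
    rw [h] at h1
    omega
  · have h1 := f1_lab2 P hx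
    have h2 := f1_lab1 P hy
    rw [h] at h1
    omega
  · have h1 := f1_rk_twos P hx
    have h2 := f1_rk_twos P hy
    have b1 : rk (twos n D) x < n := by
      have := rk_lt_card (mem_twos.mpr hx); have := P.hB; omega
    have b2 : rk (twos n D) y < n := by
      have := rk_lt_card (mem_twos.mpr hy); have := P.hB; omega
    have := P.hn
    rw [h] at h1
    exact rk_inj (mem_twos.mpr hx) (mem_twos.mpr hy) (by omega)

/-- `f0` as a permutation. -/
noncomputable def phi0 (P : Pkg n p q D E) : Equiv.Perm (Fin (2*n)) :=
  Equiv.ofBijective (f0 P) (Finite.injective_iff_bijective.mp (f0_injective P))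

/-- `f1` as a permutation. -/
noncomputable def phi1 (P : Pkg n p q D E) : Equiv.Perm (Fin (2*n)) :=
  Equiv.ofBijective (f1 P) (Finite.injective_iff_bijective.mp (f1_injective P))

@[simp] lemma phi0_apply (P : Pkg n p q D E) (x : Fin (2*n)) : phi0 P x = f0 P x := rfl

@[simp] lemma phi1_apply (P : Pkg n p q D E) (x : Fin (2*n)) : phi1 P x = f1 P x := rfl

end TauSec

end Stmt11Aux

namespace Stmt11Aux

section KeySec

variable {n p q : ℕ} {D E : Fin (2*n) → ℕ}

def idx1 (n : ℕ) (hn : 1 ≤ n) : Fin (2*n) := ⟨n-1, by omega⟩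

def idx2 (n : ℕ) (hn : 1 ≤ n) : Fin (2*n) := ⟨n, by omega⟩

def Cc (P : Pkg n p q D E) (π : Equiv.Perm (Fin (2*n))) : Prop :=
  (p ≤ ((π (idx1 n P.hn)):ℕ) ∧ ((π (idx1 n P.hn)):ℕ) < p+q) ∧
  (p ≤ ((π (idx2 n P.hn)):ℕ) ∧ ((π (idx2 n P.hn)):ℕ) < p+q)

open Classical in
/-- The descent-preserving recoding of shuffles. -/
noncomputable def Phi (P : Pkg n p q D E) (π : Equiv.Perm (Fin (2*n))) :
    Equiv.Perm (Fin (2*n)) :=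
  if Cc P π then Fin.revPerm.trans (π.trans (phi1 P)) else π.trans (phi0 P)

lemma Phi_pos (P : Pkg n p q D E) {π : Equiv.Perm (Fin (2*n))} (h : Cc P π)
    (i : Fin (2*n)) : Phi P π i = f1 P (π i.rev) := by
  rw [Phi, if_pos h]
  rfl

lemma Phi_neg (P : Pkg n p q D E) {π : Equiv.Perm (Fin (2*n))} (h : ¬ Cc P π)
    (i : Fin (2*n)) : Phi P π i = f0 P (π i) := by
  rw [Phi, if_neg h]
  rfl

lemma rev_idx1 (P : Pkg n p q D E) : (idx1 n P.hn).rev = idx2 n P.hn := by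
  have := P.hn
  apply Fin.ext
  rw [Fin.val_rev]
  show 2*n - ((n-1) + 1) = n
  omega

lemma rev_idx2 (P : Pkg n p q D E) : (idx2 n P.hn).rev = idx1 n P.hn := by
  have := P.hn
  apply Fin.ext
  rw [Fin.val_rev]
  show 2*n - (n + 1) = n-1
  omega

end KeySec

end Stmt11Aux

namespace Stmt11Aux

section KeySec2

variable {n p q : ℕ} {D E : Fin (2*n) → ℕ}

@[simp] lemma idx1_val {hn : 1 ≤ n} : ((idx1 n hn : Fin (2*n)) : ℕ) = n-1 := rfl

@[simp] lemma idx2_val {hn : 1 ≤ n} : ((idx2 n hn : Fin (2*n)) : ℕ) = n := rfl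

lemma shuffle_Phi (P : Pkg n p q D E) (π : Equiv.Perm (Fin (2*n)))
    (hsh : ∀ i : Fin (2*n), D (π i) = if (i:ℕ) < n then 1 else 2) :
    ∀ i : Fin (2*n), E (Phi P π i) = if (i:ℕ) < n then 1 else 2 := by
  have hn := P.hn
  intro i
  by_cases hC : Cc P π
  · rw [Phi_pos P hC]
    by_cases hi : (i:ℕ) < n
    · have hrev : ¬ ((i.rev : Fin (2*n)) : ℕ) < n := by rw [Fin.val_rev]; omega
      have hD : D (π i.rev) = 2 := by rw [hsh, if_neg hrev]
      rw [if_pos hi, f1_lab2 P hD]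
    · have hrev : ((i.rev : Fin (2*n)) : ℕ) < n := by
        rw [Fin.val_rev]
        have := i.isLt
        omega
      have hD : D (π i.rev) = 1 := by rw [hsh, if_pos hrev]
      rw [if_neg hi, f1_lab1 P hD]
  · rw [Phi_neg P hC]
    by_cases hi : (i:ℕ) < n
    · have hD : D (π i) = 1 := by rw [hsh, if_pos hi]
      rw [if_pos hi, f0_lab1 P hD]
    · have hD : D (π i) = 2 := by rw [hsh, if_neg hi]
      rw [if_neg hi, f0_lab2 P hD]

lemma des_Phi (P : Pkg n p q D E) (π : Equiv.Perm (Fin (2*n)))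
    (hsh : ∀ i : Fin (2*n), D (π i) = if (i:ℕ) < n then 1 else 2) :
    des (fun i => (Phi P π) i) = des (fun i => π i) := by
  have hn := P.hn
  by_cases hC : Cc P π
  · unfold des
    apply Finset.card_nbij' (i := fun pr : Fin (2*n) × Fin (2*n) => (pr.2.rev, pr.1.rev))
      (j := fun pr : Fin (2*n) × Fin (2*n) => (pr.2.rev, pr.1.rev))
    · intro pr hpr
      simp only [Finset.mem_coe, Finset.mem_filter, Finset.mem_univ, true_and] at hpr ⊢
      obtain ⟨hadj, hlt⟩ := hpr
      have hb1 : (pr.1 : ℕ) < 2*n := pr.1.isLt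
      have hb2 : (pr.2 : ℕ) < 2*n := pr.2.isLt
      refine ⟨by rw [Fin.val_rev, Fin.val_rev]; omega, ?_⟩
      rw [Phi_pos P hC, Phi_pos P hC] at hlt
      rcases show ((pr.2:ℕ) < n) ∨ (n < (pr.2:ℕ)) ∨ ((pr.1:ℕ) = n-1 ∧ (pr.2:ℕ) = n)
          by omega with h | h | h
      · have l1 : D (π pr.1.rev) = 2 := by rw [hsh, if_neg (by rw [Fin.val_rev]; omega)]
        have l2 : D (π pr.2.rev) = 2 := by rw [hsh, if_neg (by rw [Fin.val_rev]; omega)]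
        exact (f1_lt_iff_twos P l2 l1).mp hlt
      · have l1 : D (π pr.1.rev) = 1 := by rw [hsh, if_pos (by rw [Fin.val_rev]; omega)]
        have l2 : D (π pr.2.rev) = 1 := by rw [hsh, if_pos (by rw [Fin.val_rev]; omega)]
        exact (f1_lt_iff_ones P l2 l1).mp hlt
      · have he1 : pr.1.rev = idx2 n P.hn := Fin.ext (by rw [Fin.val_rev, idx2_val]; omega)
        have he2 : pr.2.rev = idx1 n P.hn := Fin.ext (by rw [Fin.val_rev, idx1_val]; omega)
        rw [he1, he2] at hlt ⊢
        have l1 : D (π (idx1 n P.hn)) = 1 := by rw [hsh, if_pos (by rw [idx1_val]; omega)]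
        have l2 : D (π (idx2 n P.hn)) = 2 := by rw [hsh, if_neg (by rw [idx2_val]; omega)]
        rw [f1_eq_tau_ones P l1 hC.1, f1_eq_tau_twos P l2 hC.2] at hlt
        have t1 := tau_val (hlen := P.hlen) hC.1
        have t2 := tau_val (hlen := P.hlen) hC.2
        have hc1 := hC.1
        have hc2 := hC.2
        rw [Fin.lt_def] at hlt ⊢
        omega
    · intro pr hpr
      simp only [Finset.mem_coe, Finset.mem_filter, Finset.mem_univ, true_and] at hpr ⊢
      obtain ⟨hadj, hlt⟩ := hpr
      have hb1 : (pr.1 : ℕ) < 2*n := pr.1.isLt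
      have hb2 : (pr.2 : ℕ) < 2*n := pr.2.isLt
      refine ⟨by rw [Fin.val_rev, Fin.val_rev]; omega, ?_⟩
      rw [Phi_pos P hC, Phi_pos P hC, Fin.rev_rev, Fin.rev_rev]
      rcases show ((pr.2:ℕ) < n) ∨ (n < (pr.2:ℕ)) ∨ ((pr.1:ℕ) = n-1 ∧ (pr.2:ℕ) = n)
          by omega with h | h | h
      · have l1 : D (π pr.1) = 1 := by rw [hsh, if_pos (by omega)]
        have l2 : D (π pr.2) = 1 := by rw [hsh, if_pos h]
        exact (f1_lt_iff_ones P l1 l2).mpr hlt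
      · have l1 : D (π pr.1) = 2 := by rw [hsh, if_neg (by omega)]
        have l2 : D (π pr.2) = 2 := by rw [hsh, if_neg (by omega)]
        exact (f1_lt_iff_twos P l1 l2).mpr hlt
      · have he1 : pr.1 = idx1 n P.hn := Fin.ext (by rw [idx1_val]; omega)
        have he2 : pr.2 = idx2 n P.hn := Fin.ext (by rw [idx2_val]; omega)
        rw [he1, he2] at hlt ⊢
        have l1 : D (π (idx1 n P.hn)) = 1 := by rw [hsh, if_pos (by rw [idx1_val]; omega)]
        have l2 : D (π (idx2 n P.hn)) = 2 := by rw [hsh, if_neg (by rw [idx2_val]; omega)]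
        rw [f1_eq_tau_ones P l1 hC.1, f1_eq_tau_twos P l2 hC.2]
        have t1 := tau_val (hlen := P.hlen) hC.1
        have t2 := tau_val (hlen := P.hlen) hC.2
        have hc1 := hC.1
        have hc2 := hC.2
        rw [Fin.lt_def] at hlt ⊢
        omega
    · intro pr _
      simp [Fin.rev_rev]
    · intro pr _
      simp [Fin.rev_rev]
  · unfold des
    congr 1
    apply Finset.filter_congr
    intro pr _
    apply and_congr_right
    intro hadj
    simp only [Phi_neg P hC]
    have hb2 : (pr.2 : ℕ) < 2*n := pr.2.isLt
    rcases show ((pr.2:ℕ) < n) ∨ (n < (pr.2:ℕ)) ∨ ((pr.1:ℕ) = n-1 ∧ (pr.2:ℕ) = n)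
        by omega with h | h | h
    · have l1 : D (π pr.1) = 1 := by rw [hsh, if_pos (by omega)]
      have l2 : D (π pr.2) = 1 := by rw [hsh, if_pos h]
      exact f0_lt_iff_ones P l2 l1
    · have l1 : D (π pr.1) = 2 := by rw [hsh, if_neg (by omega)]
      have l2 : D (π pr.2) = 2 := by rw [hsh, if_neg (by omega)]
      exact f0_lt_iff_twos P l2 l1
    · have he1 : pr.1 = idx1 n P.hn := Fin.ext (by rw [idx1_val]; omega)
      have he2 : pr.2 = idx2 n P.hn := Fin.ext (by rw [idx2_val]; omega)
      rw [he1, he2]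
      have l1 : D (π (idx1 n P.hn)) = 1 := by rw [hsh, if_pos (by rw [idx1_val]; omega)]
      have l2 : D (π (idx2 n P.hn)) = 2 := by rw [hsh, if_neg (by rw [idx2_val]; omega)]
      exact f0_cross P l1 l2 hC

end KeySec2

end Stmt11Aux

namespace Stmt11Aux

section KeySec3

variable {n p q : ℕ} {D E : Fin (2*n) → ℕ}

lemma key (P : Pkg n p q D E) (d : ℕ) :
    ((Finset.univ : Finset (Equiv.Perm (Fin (2 * n)))).filter
      (fun π => (∀ i : Fin (2 * n), D (π i) = if (i : ℕ) < n then 1 else 2) ∧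
        des (fun i => π i) = d)).card
    ≤ ((Finset.univ : Finset (Equiv.Perm (Fin (2 * n)))).filter
      (fun π => (∀ i : Fin (2 * n), E (π i) = if (i : ℕ) < n then 1 else 2) ∧
        des (fun i => π i) = d)).card := by
  have hn := P.hn
  apply Finset.card_le_card_of_injOn (Phi P)
  · intro π hπ
    simp only [Finset.mem_coe, Finset.mem_filter, Finset.mem_univ, true_and] at hπ ⊢
    obtain ⟨hsh, hdes⟩ := hπ
    exact ⟨shuffle_Phi P π hsh, by rw [des_Phi P π hsh]; exact hdes⟩
  · intro π hπ π' hπ' heq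
    simp only [Finset.coe_filter, Set.mem_setOf_eq, Finset.mem_univ, true_and] at hπ hπ'
    obtain ⟨hsh, -⟩ := hπ
    obtain ⟨hsh', -⟩ := hπ'
    have hmix : ∀ (σ σ' : Equiv.Perm (Fin (2*n))),
        (∀ i : Fin (2*n), D (σ i) = if (i:ℕ) < n then 1 else 2) →
        (∀ i : Fin (2*n), D (σ' i) = if (i:ℕ) < n then 1 else 2) →
        Cc P σ → ¬ Cc P σ' → Phi P σ = Phi P σ' → False := by
      intro σ σ' hs hs' hc hc' he
      have l1 : D (σ (idx1 n P.hn)) = 1 := by rw [hs, if_pos (by rw [idx1_val]; omega)]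
      have l2 : D (σ (idx2 n P.hn)) = 2 := by rw [hs, if_neg (by rw [idx2_val]; omega)]
      have h1 : Phi P σ (idx1 n P.hn) = tau n p q P.hlen (σ (idx2 n P.hn)) := by
        rw [Phi_pos P hc, rev_idx1 P, f1_eq_tau_twos P l2 hc.2]
      have h2 : Phi P σ (idx2 n P.hn) = tau n p q P.hlen (σ (idx1 n P.hn)) := by
        rw [Phi_pos P hc, rev_idx2 P, f1_eq_tau_ones P l1 hc.1]
      have hβ1 : p ≤ (Phi P σ (idx1 n P.hn) : ℕ) ∧ (Phi P σ (idx1 n P.hn) : ℕ) < p+q := by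
        rw [h1, tau_val hc.2]
        have := hc.2
        omega
      have hβ2 : p ≤ (Phi P σ (idx2 n P.hn) : ℕ) ∧ (Phi P σ (idx2 n P.hn) : ℕ) < p+q := by
        rw [h2, tau_val hc.1]
        have := hc.1
        omega
      rw [he] at hβ1 hβ2
      rw [Phi_neg P hc'] at hβ1 hβ2
      rcases not_and_or.mp hc' with h | h
      · have l1' : D (σ' (idx1 n P.hn)) = 1 := by rw [hs', if_pos (by rw [idx1_val]; omega)]
        obtain ⟨r1, r2⟩ := f0_region_ones P l1'
        omega
      · have l2' : D (σ' (idx2 n P.hn)) = 2 := by rw [hs', if_neg (by rw [idx2_val]; omega)]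
        obtain ⟨r1, r2⟩ := f0_region_twos P l2'
        omega
    by_cases hc : Cc P π <;> by_cases hc' : Cc P π'
    · apply Equiv.ext
      intro j
      have hj : Phi P π j.rev = Phi P π' j.rev := by rw [heq]
      rw [Phi_pos P hc, Phi_pos P hc', Fin.rev_rev] at hj
      exact f1_injective P hj
    · exact (hmix π π' hsh hsh' hc hc' heq).elim
    · exact (hmix π' π hsh' hsh hc' hc heq.symm).elim
    · apply Equiv.ext
      intro j
      have hj : Phi P π j = Phi P π' j := by rw [heq]
      rw [Phi_neg P hc, Phi_neg P hc'] at hj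
      exact f0_injective P hj

end KeySec3

end Stmt11Aux

namespace Stmt11Aux

section MkPkg

variable {n p q : ℕ} {D E : Fin (2*n) → ℕ}

lemma decomp (s : Finset (Fin (2*n))) :
    s.card = cnt s p + (s.filter (fun y : Fin (2*n) => p ≤ (y:ℕ) ∧ (y:ℕ) < p+q)).card
      + (s.filter (fun y : Fin (2*n) => p+q ≤ (y:ℕ))).card := by
  have h1 : cnt s (2*n) = s.card := cnt_top
  by_cases hpq : p + q ≤ 2*n
  · have h2 := part s hpq
    have h3 := part s (Nat.le_add_right p q)
    have h4 : s.filter (fun y : Fin (2*n) => p+q ≤ (y:ℕ) ∧ (y:ℕ) < 2*n)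
        = s.filter (fun y : Fin (2*n) => p+q ≤ (y:ℕ)) := by
      apply Finset.filter_congr
      intro z _
      have := z.isLt
      omega
    rw [h4] at h2
    omega
  · -- impossible region: p ≤ y ∧ y < p+q could still occur; but p+q > 2n
    have h3 := part s (Nat.le_add_right p q)
    have h5 : cnt s (p+q) = cnt s (2*n) := by
      unfold cnt
      congr 1
      apply Finset.filter_congr
      intro z _
      have := z.isLt
      omega
    have h6 : s.filter (fun y : Fin (2*n) => p+q ≤ (y:ℕ)) = ∅ := by
      apply Finset.filter_false_of_mem
      intro z _
      have := z.isLt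
      omega
    rw [h6]
    simp only [Finset.card_empty]
    omega

lemma flank_low_ones (hag : ∀ i : Fin (2*n), ((i:ℕ) < p ∨ p+q ≤ (i:ℕ)) → E i = D i) :
    (ones n E).filter (fun y : Fin (2*n) => (y:ℕ) < p)
      = (ones n D).filter (fun y : Fin (2*n) => (y:ℕ) < p) := by
  ext z
  simp only [mem_filter, mem_ones]
  constructor
  · rintro ⟨h1, h2⟩
    rw [hag z (Or.inl h2)] at h1
    exact ⟨h1, h2⟩
  · rintro ⟨h1, h2⟩
    rw [hag z (Or.inl h2)]
    exact ⟨h1, h2⟩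

lemma flank_low_twos (hag : ∀ i : Fin (2*n), ((i:ℕ) < p ∨ p+q ≤ (i:ℕ)) → E i = D i) :
    (twos n E).filter (fun y : Fin (2*n) => (y:ℕ) < p)
      = (twos n D).filter (fun y : Fin (2*n) => (y:ℕ) < p) := by
  ext z
  simp only [mem_filter, mem_twos]
  constructor
  · rintro ⟨h1, h2⟩
    rw [hag z (Or.inl h2)] at h1
    exact ⟨h1, h2⟩
  · rintro ⟨h1, h2⟩
    rw [hag z (Or.inl h2)]
    exact ⟨h1, h2⟩

lemma flank_high_ones (hag : ∀ i : Fin (2*n), ((i:ℕ) < p ∨ p+q ≤ (i:ℕ)) → E i = D i) :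
    (ones n E).filter (fun y : Fin (2*n) => p+q ≤ (y:ℕ))
      = (ones n D).filter (fun y : Fin (2*n) => p+q ≤ (y:ℕ)) := by
  ext z
  simp only [mem_filter, mem_ones]
  constructor
  · rintro ⟨h1, h2⟩
    rw [hag z (Or.inr h2)] at h1
    exact ⟨h1, h2⟩
  · rintro ⟨h1, h2⟩
    rw [hag z (Or.inr h2)]
    exact ⟨h1, h2⟩

lemma flank_high_twos (hag : ∀ i : Fin (2*n), ((i:ℕ) < p ∨ p+q ≤ (i:ℕ)) → E i = D i) :
    (twos n E).filter (fun y : Fin (2*n) => p+q ≤ (y:ℕ))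
      = (twos n D).filter (fun y : Fin (2*n) => p+q ≤ (y:ℕ)) := by
  ext z
  simp only [mem_filter, mem_twos]
  constructor
  · rintro ⟨h1, h2⟩
    rw [hag z (Or.inr h2)] at h1
    exact ⟨h1, h2⟩
  · rintro ⟨h1, h2⟩
    rw [hag z (Or.inr h2)]
    exact ⟨h1, h2⟩

lemma beta_flip_ones (hlen : 2*n = p+q+p)
    (hDlab : ∀ i, D i = 1 ∨ D i = 2)
    (hstar : ∀ i j : Fin (2*n), p ≤ (i:ℕ) → (i:ℕ) < p+q → p ≤ (j:ℕ) → (j:ℕ) < p+q →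
      (i:ℕ)+(j:ℕ) = 2*p+q-1 → E i = 3 - D j) :
    ((ones n E).filter (fun y : Fin (2*n) => p ≤ (y:ℕ) ∧ (y:ℕ) < p+q)).card
      = ((twos n D).filter (fun y : Fin (2*n) => p ≤ (y:ℕ) ∧ (y:ℕ) < p+q)).card := by
  apply Finset.card_nbij' (i := tau n p q hlen) (j := tau n p q hlen)
  · intro z hz
    simp only [Finset.mem_coe, mem_filter, mem_ones] at hz
    obtain ⟨h1, h2⟩ := hz
    have hv := tau_val (hlen := hlen) h2
    have hβ' : p ≤ (tau n p q hlen z : ℕ) ∧ (tau n p q hlen z : ℕ) < p+q := by omega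
    have hs := hstar z (tau n p q hlen z) h2.1 h2.2 hβ'.1 hβ'.2 (by omega)
    simp only [Finset.mem_coe, mem_filter, mem_twos]
    rcases hDlab (tau n p q hlen z) with h | h
    · omega
    · exact ⟨h, hβ'⟩
  · intro z hz
    simp only [Finset.mem_coe, mem_filter, mem_twos] at hz
    obtain ⟨h1, h2⟩ := hz
    have hv := tau_val (hlen := hlen) h2
    have hβ' : p ≤ (tau n p q hlen z : ℕ) ∧ (tau n p q hlen z : ℕ) < p+q := by omega
    have hs := hstar (tau n p q hlen z) z hβ'.1 hβ'.2 h2.1 h2.2 (by omega)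
    simp only [Finset.mem_coe, mem_filter, mem_ones]
    exact ⟨by omega, hβ'⟩
  · intro z hz
    simp only [Finset.mem_coe, mem_filter, mem_ones] at hz
    exact tau_invol hlen hz.2
  · intro z hz
    simp only [Finset.mem_coe, mem_filter, mem_twos] at hz
    exact tau_invol hlen hz.2

lemma beta_flip_twos (hlen : 2*n = p+q+p)
    (hDlab : ∀ i, D i = 1 ∨ D i = 2)
    (hstar : ∀ i j : Fin (2*n), p ≤ (i:ℕ) → (i:ℕ) < p+q → p ≤ (j:ℕ) → (j:ℕ) < p+q →
      (i:ℕ)+(j:ℕ) = 2*p+q-1 → E i = 3 - D j) :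
    ((twos n E).filter (fun y : Fin (2*n) => p ≤ (y:ℕ) ∧ (y:ℕ) < p+q)).card
      = ((ones n D).filter (fun y : Fin (2*n) => p ≤ (y:ℕ) ∧ (y:ℕ) < p+q)).card := by
  apply Finset.card_nbij' (i := tau n p q hlen) (j := tau n p q hlen)
  · intro z hz
    simp only [Finset.mem_coe, mem_filter, mem_twos] at hz
    obtain ⟨h1, h2⟩ := hz
    have hv := tau_val (hlen := hlen) h2
    have hβ' : p ≤ (tau n p q hlen z : ℕ) ∧ (tau n p q hlen z : ℕ) < p+q := by omega
    have hs := hstar z (tau n p q hlen z) h2.1 h2.2 hβ'.1 hβ'.2 (by omega)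
    simp only [Finset.mem_coe, mem_filter, mem_ones]
    rcases hDlab (tau n p q hlen z) with h | h
    · exact ⟨h, hβ'⟩
    · omega
  · intro z hz
    simp only [Finset.mem_coe, mem_filter, mem_ones] at hz
    obtain ⟨h1, h2⟩ := hz
    have hv := tau_val (hlen := hlen) h2
    have hβ' : p ≤ (tau n p q hlen z : ℕ) ∧ (tau n p q hlen z : ℕ) < p+q := by omega
    have hs := hstar (tau n p q hlen z) z hβ'.1 hβ'.2 h2.1 h2.2 (by omega)
    simp only [Finset.mem_coe, mem_filter, mem_twos]
    exact ⟨by omega, hβ'⟩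
  · intro z hz
    simp only [Finset.mem_coe, mem_filter, mem_twos] at hz
    exact tau_invol hlen hz.2
  · intro z hz
    simp only [Finset.mem_coe, mem_filter, mem_ones] at hz
    exact tau_invol hlen hz.2

lemma mkPkg (hn : 1 ≤ n) (hlen : 2*n = p+q+p)
    (hDlab : ∀ i, D i = 1 ∨ D i = 2)
    (hDones : (Finset.univ.filter (fun i => D i = 1)).card = n)
    (hb : (Finset.univ.filter (fun i : Fin (2*n) =>
            p ≤ (i:ℕ) ∧ (i:ℕ) < p+q ∧ D i = 1)).card
        = (Finset.univ.filter (fun i : Fin (2*n) =>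
            p ≤ (i:ℕ) ∧ (i:ℕ) < p+q ∧ D i = 2)).card)
    (hag : ∀ i : Fin (2*n), ((i:ℕ) < p ∨ p+q ≤ (i:ℕ)) → E i = D i)
    (hstar : ∀ i j : Fin (2*n), p ≤ (i:ℕ) → (i:ℕ) < p+q → p ≤ (j:ℕ) → (j:ℕ) < p+q →
      (i:ℕ)+(j:ℕ) = 2*p+q-1 → E i = 3 - D j) :
    Pkg n p q D E := by
  have hElab : ∀ i, E i = 1 ∨ E i = 2 := by
    intro i
    by_cases hi : p ≤ (i:ℕ) ∧ (i:ℕ) < p+q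
    · set j : Fin (2*n) := ⟨2*p+q-1-(i:ℕ), by omega⟩ with hj
      have hs := hstar i j hi.1 hi.2 (by simp [hj]; omega) (by simp [hj]; omega)
        (by simp [hj]; omega)
      rcases hDlab j with h | h <;> omega
    · rw [hag i (by omega)]
      exact hDlab i
  have hA : (ones n D).card = n := hDones
  have hB : (twos n D).card = n := by
    have hdisj : Disjoint (ones n D) (twos n D) := by
      rw [Finset.disjoint_left]
      intro z hz hz'
      rw [mem_ones] at hz
      rw [mem_twos] at hz'
      omega
    have hun : ones n D ∪ twos n D = univ := by
      ext z
      simp only [mem_union, mem_ones, mem_twos, mem_univ, iff_true]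
      exact hDlab z
    have := Finset.card_union_of_disjoint hdisj
    rw [hun, Finset.card_univ, Fintype.card_fin] at this
    omega
  -- the middle-block counts
  have hAq : ((ones n D).filter (fun i : Fin (2*n) => p ≤ (i:ℕ) ∧ (i:ℕ) < p+q)).card
      = n - p := by
    have e1 : (ones n D).filter (fun i : Fin (2*n) => p ≤ (i:ℕ) ∧ (i:ℕ) < p+q)
        = Finset.univ.filter (fun i : Fin (2*n) => p ≤ (i:ℕ) ∧ (i:ℕ) < p+q ∧ D i = 1) := by
      ext z
      simp only [mem_filter, mem_ones, mem_univ, true_and]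
      tauto
    have e2 : (twos n D).filter (fun i : Fin (2*n) => p ≤ (i:ℕ) ∧ (i:ℕ) < p+q)
        = Finset.univ.filter (fun i : Fin (2*n) => p ≤ (i:ℕ) ∧ (i:ℕ) < p+q ∧ D i = 2) := by
      ext z
      simp only [mem_filter, mem_twos, mem_univ, true_and]
      tauto
    -- the whole block has q elements
    have e3 := part (univ : Finset (Fin (2*n))) (Nat.le_add_right p q)
    rw [cnt_univ (p+q) (by omega), cnt_univ p (by omega)] at e3
    -- partition the block by labels
    have e4 : (univ : Finset (Fin (2*n))).filter (fun y : Fin (2*n) => p ≤ (y:ℕ) ∧ (y:ℕ) < p+q)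
        = ((ones n D).filter (fun i : Fin (2*n) => p ≤ (i:ℕ) ∧ (i:ℕ) < p+q))
          ∪ ((twos n D).filter (fun i : Fin (2*n) => p ≤ (i:ℕ) ∧ (i:ℕ) < p+q)) := by
      ext z
      simp only [mem_union, mem_filter, mem_ones, mem_twos, mem_univ, true_and]
      rcases hDlab z with h | h <;> tauto
    have hdisj : Disjoint ((ones n D).filter (fun i : Fin (2*n) => p ≤ (i:ℕ) ∧ (i:ℕ) < p+q))
        ((twos n D).filter (fun i : Fin (2*n) => p ≤ (i:ℕ) ∧ (i:ℕ) < p+q)) := by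
      rw [Finset.disjoint_left]
      intro z hz hz'
      simp only [mem_filter, mem_ones, mem_twos] at hz hz'
      omega
    have e5 := Finset.card_union_of_disjoint hdisj
    rw [← e4] at e5
    rw [e1, e2] at e5
    rw [hb] at e5
    rw [e5] at e3
    rw [e1, hb]
    omega
  have hBq : ((twos n D).filter (fun i : Fin (2*n) => p ≤ (i:ℕ) ∧ (i:ℕ) < p+q)).card
      = n - p := by
    have e1 : (ones n D).filter (fun i : Fin (2*n) => p ≤ (i:ℕ) ∧ (i:ℕ) < p+q)
        = Finset.univ.filter (fun i : Fin (2*n) => p ≤ (i:ℕ) ∧ (i:ℕ) < p+q ∧ D i = 1) := by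
      ext z
      simp only [mem_filter, mem_ones, mem_univ, true_and]
      tauto
    have e2 : (twos n D).filter (fun i : Fin (2*n) => p ≤ (i:ℕ) ∧ (i:ℕ) < p+q)
        = Finset.univ.filter (fun i : Fin (2*n) => p ≤ (i:ℕ) ∧ (i:ℕ) < p+q ∧ D i = 2) := by
      ext z
      simp only [mem_filter, mem_twos, mem_univ, true_and]
      tauto
    rw [e2, ← hb, ← e1]
    exact hAq
  have hA'q : ((ones n E).filter (fun i : Fin (2*n) => p ≤ (i:ℕ) ∧ (i:ℕ) < p+q)).card
      = n - p := by
    rw [beta_flip_ones hlen hDlab hstar]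
    exact hBq
  have hB'q : ((twos n E).filter (fun i : Fin (2*n) => p ≤ (i:ℕ) ∧ (i:ℕ) < p+q)).card
      = n - p := by
    rw [beta_flip_twos hlen hDlab hstar]
    exact hAq
  have hA' : (ones n E).card = n := by
    have d1 := decomp (p := p) (q := q) (ones n E)
    have d2 := decomp (p := p) (q := q) (ones n D)
    have c1 : cnt (ones n E) p = cnt (ones n D) p := by
      unfold cnt
      rw [flank_low_ones hag]
    have c2 := flank_high_ones hag
    rw [c1, c2, hA'q] at d1
    rw [hAq] at d2
    rw [hA] at d2
    omega
  have hB' : (twos n E).card = n := by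
    have d1 := decomp (p := p) (q := q) (twos n E)
    have d2 := decomp (p := p) (q := q) (twos n D)
    have c1 : cnt (twos n E) p = cnt (twos n D) p := by
      unfold cnt
      rw [flank_low_twos hag]
    have c2 := flank_high_twos hag
    rw [c1, c2, hB'q] at d1
    rw [hBq] at d2
    rw [hB] at d2
    omega
  exact ⟨hn, hlen, hDlab, hElab, hA, hB, hA', hB', hAq, hBq, hA'q, hB'q, hag, hstar⟩

end MkPkg

end Stmt11Aux

theorem stmt11 (n p q : ℕ) (hn : 1 ≤ n)
    -- `D₁ = αβγ`, `D₂ = αβ*γ` where `|α| = p`, `|β| = q`, `|γ| = p`: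
    (hlen : 2 * n = p + q + p)
    (D₁ D₂ : Fin (2 * n) → ℕ)
    (hD₁lab : ∀ i, D₁ i = 1 ∨ D₁ i = 2)
    (hD₁ones : (Finset.univ.filter (fun i => D₁ i = 1)).card = n)
    -- `β` contains equally many 1's and 2's:
    (hβ : (Finset.univ.filter (fun i : Fin (2 * n) =>
            p ≤ (i : ℕ) ∧ (i : ℕ) < p + q ∧ D₁ i = 1)).card
        = (Finset.univ.filter (fun i : Fin (2 * n) =>
            p ≤ (i : ℕ) ∧ (i : ℕ) < p + q ∧ D₁ i = 2)).card)
    -- `D₂` agrees with `D₁` on `α` and `γ`: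
    (hαγ : ∀ i : Fin (2 * n), ((i : ℕ) < p ∨ p + q ≤ (i : ℕ)) → D₂ i = D₁ i)
    -- on `β`, `D₂` is the reversal of `D₁` with 1's and 2's interchanged:
    (hβstar : ∀ i j : Fin (2 * n), p ≤ (i : ℕ) → (i : ℕ) < p + q →
      p ≤ (j : ℕ) → (j : ℕ) < p + q → (i : ℕ) + (j : ℕ) = 2 * p + q - 1 →
      D₂ i = 3 - D₁ j) :
    -- the descent polynomials of shuffles from `1^n, 2^n` to `D₁` and to `D₂` agree:
    (∀ d : ℕ,
      ((Finset.univ : Finset (Equiv.Perm (Fin (2 * n)))).filter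
        (fun π => (∀ i : Fin (2 * n), D₁ (π i) = if (i : ℕ) < n then 1 else 2) ∧
          des (fun i => π i) = d)).card
      = ((Finset.univ : Finset (Equiv.Perm (Fin (2 * n)))).filter
        (fun π => (∀ i : Fin (2 * n), D₂ (π i) = if (i : ℕ) < n then 1 else 2) ∧
          des (fun i => π i) = d)).card) ∧
    -- hence the `a`-shuffle transition probabilities agree:
    (∀ a : ℕ, 1 ≤ a →
      (∑ π ∈ (Finset.univ : Finset (Equiv.Perm (Fin (2 * n)))).filter
          (fun π => ∀ i : Fin (2 * n), D₁ (π i) = if (i : ℕ) < n then 1 else 2),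
        (Nat.choose (a + 2 * n - 1 - des (fun i => π i)) (2 * n) : ℝ) / (a : ℝ) ^ (2 * n))
      = ∑ π ∈ (Finset.univ : Finset (Equiv.Perm (Fin (2 * n)))).filter
          (fun π => ∀ i : Fin (2 * n), D₂ (π i) = if (i : ℕ) < n then 1 else 2),
        (Nat.choose (a + 2 * n - 1 - des (fun i => π i)) (2 * n) : ℝ) / (a : ℝ) ^ (2 * n)) := by
  have P12 : Stmt11Aux.Pkg n p q D₁ D₂ :=
    Stmt11Aux.mkPkg hn hlen hD₁lab hD₁ones hβ hαγ hβstar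
  have P21 := P12.symm
  have h1 : ∀ d : ℕ,
      ((Finset.univ : Finset (Equiv.Perm (Fin (2 * n)))).filter
        (fun π => (∀ i : Fin (2 * n), D₁ (π i) = if (i : ℕ) < n then 1 else 2) ∧
          des (fun i => π i) = d)).card
      = ((Finset.univ : Finset (Equiv.Perm (Fin (2 * n)))).filter
        (fun π => (∀ i : Fin (2 * n), D₂ (π i) = if (i : ℕ) < n then 1 else 2) ∧
          des (fun i => π i) = d)).card :=
    fun d => le_antisymm (Stmt11Aux.key P12 d) (Stmt11Aux.key P21 d)
  refine ⟨h1, ?_⟩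
  intro a _
  have hb : ∀ (π : Equiv.Perm (Fin (2*n))), des (fun i => π i) < 2*n*(2*n)+1 := by
    intro π
    have h2 := Finset.card_filter_le (Finset.univ : Finset (Fin (2*n) × Fin (2*n)))
      (fun pr => (pr.1 : ℕ) + 1 = (pr.2 : ℕ) ∧ (fun i => π i) pr.2 < (fun i => π i) pr.1)
    rw [Finset.card_univ, Fintype.card_prod, Fintype.card_fin] at h2
    unfold des
    omega
  have main : ∀ (Dk : Fin (2*n) → ℕ),
      (∑ π ∈ (Finset.univ : Finset (Equiv.Perm (Fin (2 * n)))).filter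
          (fun π => ∀ i : Fin (2 * n), Dk (π i) = if (i : ℕ) < n then 1 else 2),
        (Nat.choose (a + 2 * n - 1 - des (fun i => π i)) (2 * n) : ℝ) / (a : ℝ) ^ (2 * n))
      = ∑ d ∈ Finset.range (2*n*(2*n)+1),
          ((((Finset.univ : Finset (Equiv.Perm (Fin (2 * n)))).filter
            (fun π => (∀ i : Fin (2 * n), Dk (π i) = if (i : ℕ) < n then 1 else 2) ∧
              des (fun i => π i) = d)).card : ℝ) *
            ((Nat.choose (a + 2 * n - 1 - d) (2 * n) : ℝ) / (a : ℝ) ^ (2 * n))) := by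
    intro Dk
    rw [← Finset.sum_fiberwise_of_maps_to (t := Finset.range (2*n*(2*n)+1))
      (g := fun π => des (fun i => π i))
      (fun π _ => Finset.mem_range.mpr (hb π))
      (fun π => (Nat.choose (a + 2 * n - 1 - des (fun i => π i)) (2 * n) : ℝ)
        / (a : ℝ) ^ (2 * n))]
    apply Finset.sum_congr rfl
    intro d _
    rw [Finset.filter_filter]
    have hinner : ∀ π ∈ (Finset.univ : Finset (Equiv.Perm (Fin (2 * n)))).filter
        (fun π => (∀ i : Fin (2 * n), Dk (π i) = if (i : ℕ) < n then 1 else 2) ∧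
          des (fun i => π i) = d),
        (Nat.choose (a + 2 * n - 1 - des (fun i => π i)) (2 * n) : ℝ) / (a : ℝ) ^ (2 * n)
        = (Nat.choose (a + 2 * n - 1 - d) (2 * n) : ℝ) / (a : ℝ) ^ (2 * n) := by
      intro π hπ
      have := (Finset.mem_filter.mp hπ).2.2
      rw [this]
    rw [Finset.sum_congr rfl hinner, Finset.sum_const, nsmul_eq_mul]
  rw [main D₁, main D₂]
  apply Finset.sum_congr rfl
  intro d _
  rw [h1 d]
end
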